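/- arXiv:2011.13016 — 10 statements merged into one kernel-verified Lean document; each statement's English description precedes it below -/
import Mathlib

section
/- Let G be a nonabelian finite 2-group such that the natural action of the automorphism group Aut(G) on G has exactly three orbits. Then G has exponent 4, the three automorphism orbits are exactly the sets of elements of order 1, of order 2, and of order 4, and the center, the commutator subgroup and the Frattini subgroup of G all coincide and are equal to the set of elements of G of order dividing 2 (in particular, both the Frattini subgroup Φ(G) and the quotient G/Φ(G) are elementary abelian 2-groups). -/
/-!
Automorphisms preserve orders. A nonabelian 2-group has elements of order 1, 2 and of some order
`a > 2`, so with only three orbits the orbits are exactly the order classes and `{1, 2, a}` is the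
set of element orders; since `x ^ 2` has order `a / 2` when `x` has order `a`, we get `a = 4`.
A characteristic subgroup is a union of orbits, and one containing an element of order 4 also
contains its square, hence everything. So every characteristic subgroup other than `1` and `G` is
`{g | g ^ 2 = 1}`. This applies to the center (nontrivial in a p-group), to the commutator subgroup
(squares are central, so `G ⧸ Z(G)` has exponent 2 and is abelian) and to the Frattini subgroup
(maximal subgroups of a p-group are normal of index p, so they contain all squares).
-/

open MulAction Subgroup
open scoped commutatorElement

section Orbits

variable {G : Type*} [Group G]

theorem orderOf_eq_of_mem_orbit_mulAut {g h : G} (hh : h ∈ orbit (MulAut G) g) :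
    orderOf h = orderOf g := by
  obtain ⟨f, rfl⟩ := hh
  exact f.orderOf_eq g

variable (G) in
noncomputable def orbitOrderOf : orbitRel.Quotient (MulAut G) G → ℕ :=
  Quotient.lift orderOf fun _ _ => orderOf_eq_of_mem_orbit_mulAut

theorem range_orbitOrderOf : Set.range (orbitOrderOf G) = Set.range (orderOf : G → ℕ) :=
  Set.range_quot_lift _

theorem card_range_orderOf_le_card_orbits [Finite G] :
    Nat.card (Set.range (orderOf : G → ℕ)) ≤ Nat.card (orbitRel.Quotient (MulAut G) G) :=
  range_orbitOrderOf (G := G) ▸ Finite.card_range_le _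

theorem nontrivial_of_not_forall_mul_comm (hna : ¬ ∀ a b : G, a * b = b * a) : Nontrivial G := by
  contrapose! hna
  exact fun a b => Subsingleton.elim _ _

theorem exists_not_orderOf_dvd_two (hna : ¬ ∀ a b : G, a * b = b * a) :
    ∃ x : G, ¬ orderOf x ∣ 2 := by
  by_contra! h
  exact hna fun a b => Commute.of_orderOf_dvd_two h a b

theorem mem_orbit_mulAut_of_orderOf_eq [Finite G]
    (hcard :
      Nat.card (orbitRel.Quotient (MulAut G) G) ≤ Nat.card (Set.range (orderOf : G → ℕ)))
    {g h : G} (hgh : orderOf g = orderOf h) : h ∈ orbit (MulAut G) g := by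
  have hinj : Function.Injective (orbitOrderOf G) := by
    have := (Set.rangeFactorization_surjective (f := orbitOrderOf G)).bijective_of_nat_card_le
      (range_orbitOrderOf (G := G) ▸ hcard)
    exact fun a b hab => this.1 (Subtype.ext hab)
  exact orbitRel_apply.mp (Quotient.exact (@hinj ⟦h⟧ ⟦g⟧ hgh.symm))

end Orbits

section ThreeOrbits

variable {G : Type*} [Group G] [Finite G]

theorem IsPGroup.exists_orderOf_eq_prime {p : ℕ} [Fact p.Prime] [Nontrivial G]
    (hp : IsPGroup p G) : ∃ g : G, orderOf g = p :=
  exists_prime_orderOf_dvd_card' p ((hp.card_eq_or_dvd).resolve_left Finite.one_lt_card.ne')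

theorem orderOf_eq_four_of_orderOf_sq_mem (hp : IsPGroup 2 G) {x : G} (hx : ¬ orderOf x ∣ 2)
    (hsq : orderOf (x ^ 2) ∈ ({1, 2, orderOf x} : Set ℕ)) : orderOf x = 4 := by
  have hx1 : x ≠ 1 := fun h => hx (by simp [h])
  have := Fact.mk Nat.prime_two
  have heven : 2 ∣ orderOf x := hp.dvd_orderOf hx1
  rw [orderOf_pow_of_dvd two_ne_zero heven] at hsq
  have hpos := orderOf_pos x
  have hx2 : orderOf x ≠ 2 := fun h => hx (h ▸ dvd_rfl)
  obtain ⟨c, hc⟩ := heven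
  simp only [Set.mem_insert_iff, Set.mem_singleton_iff] at hsq
  omega

theorem range_orderOf_eq_of_three_orbits (hp : IsPGroup 2 G) (hna : ¬ ∀ a b : G, a * b = b * a)
    (horb : Nat.card (orbitRel.Quotient (MulAut G) G) = 3) :
    Set.range (orderOf : G → ℕ) = {1, 2, 4} := by
  have := nontrivial_of_not_forall_mul_comm hna
  have := Fact.mk Nat.prime_two
  obtain ⟨y, hy⟩ := hp.exists_orderOf_eq_prime
  obtain ⟨x, hx⟩ := exists_not_orderOf_dvd_two hna
  have hsub : {1, 2, orderOf x} ⊆ Set.range (orderOf : G → ℕ) := by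
    rintro _ (rfl | rfl | rfl)
    exacts [⟨1, orderOf_one⟩, ⟨y, hy⟩, ⟨x, rfl⟩]
  have hrange : {1, 2, orderOf x} = Set.range (orderOf : G → ℕ) := by
    refine Set.eq_of_subset_of_ncard_le hsub ?_ (Set.finite_range _)
    rw [Set.ncard_eq_three.mpr ⟨1, 2, orderOf x, by omega, ?_, ?_, rfl⟩,
      ← Nat.card_coe_set_eq, ← horb]
    · exact card_range_orderOf_le_card_orbits
    · exact fun h => hx (h ▸ one_dvd 2)
    · exact fun h => hx (h ▸ dvd_rfl)
  have hx4 := orderOf_eq_four_of_orderOf_sq_mem hp hx (hrange ▸ ⟨x ^ 2, rfl⟩)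
  rw [← hrange, hx4]

end ThreeOrbits

section OrderClasses

variable {G : Type*} [Group G]

theorem Subgroup.Characteristic.mem_of_mem_orbit {H : Subgroup G} [hH : H.Characteristic]
    {g h : G} (hg : g ∈ H) (hh : h ∈ orbit (MulAut G) g) : h ∈ H := by
  obtain ⟨f, rfl⟩ := hh
  exact characteristic_iff_le_comap.mp hH f hg

theorem orderOf_eq_four_of_sq_ne_one {g : G} (h4 : g ^ 4 = 1) (h2 : g ^ 2 ≠ 1) :
    orderOf g = 4 := by
  have hdvd := orderOf_dvd_of_pow_eq_one h4
  have hndvd : ¬ orderOf g ∣ 2 := mt orderOf_dvd_iff_pow_eq_one.mp h2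
  have hle := Nat.le_of_dvd four_pos hdvd
  interval_cases orderOf g <;> omega

theorem pow_four_eq_one_of_range_orderOf (h : Set.range (orderOf : G → ℕ) = {1, 2, 4}) (g : G) :
    g ^ 4 = 1 := by
  have hg : orderOf g ∈ ({1, 2, 4} : Set ℕ) := h ▸ ⟨g, rfl⟩
  rw [← orderOf_dvd_iff_pow_eq_one]
  rcases hg with hg | hg | hg <;> simp_all

variable (horbit : ∀ g h : G, orderOf g = orderOf h → h ∈ orbit (MulAut G) g)
include horbit

theorem Subgroup.Characteristic.mem_of_sq_eq_one {H : Subgroup G} [H.Characteristic]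
    {w g : G} (hw : w ∈ H) (hw2 : orderOf w = 2) (hg : g ^ 2 = 1) : g ∈ H := by
  rcases (Nat.dvd_prime Nat.prime_two).mp (orderOf_dvd_of_pow_eq_one hg) with h1 | h2
  · rw [orderOf_eq_one_iff.mp h1]
    exact H.one_mem
  · exact Characteristic.mem_of_mem_orbit hw (horbit w g (hw2.trans h2.symm))

theorem Subgroup.Characteristic.eq_top_of_sq_ne_one (hexp : ∀ g : G, g ^ 4 = 1)
    {H : Subgroup G} [H.Characteristic] {u : G} (hu : u ∈ H) (hu2 : u ^ 2 ≠ 1) : H = ⊤ := by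
  have hu4 := orderOf_eq_four_of_sq_ne_one (hexp u) hu2
  have hsq : orderOf (u ^ 2) = 2 := by rw [orderOf_pow_of_dvd two_ne_zero (by omega), hu4]
  refine eq_top_iff.mpr fun g _ => ?_
  by_cases hg : g ^ 2 = 1
  · exact mem_of_sq_eq_one horbit (H.pow_mem hu 2) hsq hg
  · have hg4 := orderOf_eq_four_of_sq_ne_one (hexp g) hg
    exact mem_of_mem_orbit hu (horbit u g (hu4.trans hg4.symm))

theorem Subgroup.Characteristic.coe_eq_setOf_sq_eq_one (hexp : ∀ g : G, g ^ 4 = 1)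
    {H : Subgroup G} [H.Characteristic] (hbot : H ≠ ⊥) (htop : H ≠ ⊤) :
    (H : Set G) = {g | g ^ 2 = 1} := by
  have hsq : ∀ g ∈ H, g ^ 2 = 1 := fun g hg => by
    by_contra h2
    exact htop (eq_top_of_sq_ne_one horbit hexp hg h2)
  obtain ⟨w, hw, hw1⟩ := (H.bot_or_exists_ne_one).resolve_left hbot
  have hw2 : orderOf w = 2 := orderOf_eq_prime (hsq w hw) hw1
  exact Set.ext fun g => ⟨hsq g, mem_of_sq_eq_one horbit hw hw2⟩

end OrderClasses

section Generation

variable {G : Type*} [Group G]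

theorem commutator_le_of_forall_sq_mem {N : Subgroup G} [N.Normal] (h : ∀ g : G, g ^ 2 ∈ N) :
    commutator G ≤ N := by
  have hquot : ∀ q : G ⧸ N, orderOf q ∣ 2 := fun q => by
    induction q using QuotientGroup.induction_on with
    | H g => exact orderOf_dvd_of_pow_eq_one ((QuotientGroup.eq_one_iff _).mpr (h g))
  rw [commutator_def, commutator_le]
  intro g _ k _
  rw [← QuotientGroup.eq_one_iff, ← QuotientGroup.mk'_apply, map_commutatorElement,
    commutatorElement_eq_one_iff_mul_comm]
  exact Commute.of_orderOf_dvd_two hquot _ _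

theorem QuotientGroup.mem_zpowers_of_isCoatom {M : Subgroup G} [M.Normal] (hM : IsCoatom M)
    {t : G ⧸ M} (ht : t ≠ 1) (q : G ⧸ M) : q ∈ zpowers t := by
  set K := (zpowers t).comap (QuotientGroup.mk' M)
  have hMK : M ≤ K := fun m hm => by simp [K, (QuotientGroup.eq_one_iff m).mpr hm]
  have hK : K = ⊤ := by
    refine hM.2 K (hMK.lt_of_ne fun hMK => ht ?_)
    obtain ⟨s, rfl⟩ := QuotientGroup.mk'_surjective M t
    exact (QuotientGroup.eq_one_iff s).mpr (hMK ▸ mem_zpowers _)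
  obtain ⟨g, rfl⟩ := QuotientGroup.mk'_surjective M q
  have hg : g ∈ K := hK ▸ mem_top g
  exact hg

theorem IsPGroup.pow_mem_of_isCoatom [Finite G] {p : ℕ} [Fact p.Prime] (hp : IsPGroup p G)
    {M : Subgroup G} (hM : IsCoatom M) (g : G) : g ^ p ∈ M := by
  have : Group.IsNilpotent G := hp.isNilpotent
  have : M.Normal :=
    NormalizerCondition.normal_of_coatom M Group.normalizerCondition_of_isNilpotent hM
  have : Nontrivial (G ⧸ M) := QuotientGroup.nontrivial_iff.mpr hM.1
  obtain ⟨t, ht⟩ := (hp.to_quotient M).exists_orderOf_eq_prime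
  have ht1 : t ≠ 1 := fun h => (Fact.out : p.Prime).ne_one (by rw [← ht, h, orderOf_one])
  rw [← QuotientGroup.eq_one_iff, QuotientGroup.mk_pow, ← orderOf_dvd_iff_pow_eq_one, ← ht]
  exact orderOf_dvd_of_mem_zpowers (QuotientGroup.mem_zpowers_of_isCoatom hM ht1 _)

theorem IsPGroup.pow_mem_frattini [Finite G] {p : ℕ} [Fact p.Prime] (hp : IsPGroup p G) (g : G) :
    g ^ p ∈ frattini G := by
  simp only [frattini, Order.radical, mem_iInf]
  exact fun M hM => hp.pow_mem_of_isCoatom hM g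

theorem frattini_ne_top [Finite G] [Nontrivial G] : frattini G ≠ ⊤ := by
  obtain ⟨M, hM, -⟩ := (eq_top_or_exists_le_coatom (⊥ : Subgroup G)).resolve_left bot_ne_top
  exact ne_top_of_le_ne_top hM.1 (frattini_le_coatom hM)

end Generation

/-- If `G` is a nonabelian finite 2-group whose automorphism group acts on `G` with exactly
three orbits, then `G` has exponent 4, the orbits are exactly the sets of elements of equal
order (namely of orders 1, 2 and 4), and the center, commutator subgroup and Frattini
subgroup all coincide and equal the set of elements of order dividing 2. -/
theorem nonabelian_three_orbit_two_group_structure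
    (G : Type*) [Group G] [Finite G] (hp : IsPGroup 2 G)
    (hna : ¬ ∀ a b : G, a * b = b * a)
    (horb : Nat.card (MulAction.orbitRel.Quotient (MulAut G) G) = 3) :
    Monoid.exponent G = 4 ∧
    (∀ g h : G, h ∈ MulAction.orbit (MulAut G) g ↔ orderOf g = orderOf h) ∧
    Subgroup.center G = commutator G ∧
    Subgroup.center G = frattini G ∧
    (Subgroup.center G : Set G) = {g : G | g ^ 2 = 1} := by
  have hZtop : center G ≠ ⊤ := fun h => hna fun a b => mem_center_iff.mp (h ▸ mem_top b) a
  have := nontrivial_of_not_forall_mul_comm hna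
  have hrange := range_orderOf_eq_of_three_orbits hp hna horb
  have horbit (g h : G) : orderOf g = orderOf h → h ∈ orbit (MulAut G) g :=
    mem_orbit_mulAut_of_orderOf_eq <| by
      rw [horb, hrange, Nat.card_coe_set_eq, Set.ncard_eq_three.mpr ⟨1, 2, 4, by norm_num⟩]
  have hexp := pow_four_eq_one_of_range_orderOf hrange
  obtain ⟨x, hx⟩ : 4 ∈ Set.range (orderOf : G → ℕ) := by simp [hrange]
  have hZ := Characteristic.coe_eq_setOf_sq_eq_one horbit hexp hp.bot_lt_center.ne' hZtop
  have hCZ : commutator G ≤ center G := commutator_le_of_forall_sq_mem fun g => by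
    rw [← SetLike.mem_coe, hZ, Set.mem_ofPred_eq, ← pow_mul, hexp]
  have hC := Characteristic.coe_eq_setOf_sq_eq_one horbit hexp
    (mt (commutator_eq_bot_iff_center_eq_top G).mp hZtop) (ne_top_of_le_ne_top hZtop hCZ)
  have hx2 : x ^ 2 ≠ 1 := fun h => by simpa [hx] using orderOf_dvd_of_pow_eq_one h
  have hΦbot : frattini G ≠ ⊥ :=
    ne_bot_iff_exists_ne_one.mpr ⟨⟨x ^ 2, hp.pow_mem_frattini x⟩, mt Subtype.ext_iff.mp hx2⟩
  have hΦ := Characteristic.coe_eq_setOf_sq_eq_one horbit hexp hΦbot frattini_ne_top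
  exact ⟨Nat.dvd_antisymm (Monoid.exponent_dvd_of_forall_pow_eq_one hexp)
    (hx ▸ Monoid.order_dvd_exponent x),
    fun g h => ⟨fun hh => (orderOf_eq_of_mem_orbit_mulAut hh).symm, horbit g h⟩,
    SetLike.coe_injective (hZ.trans hC.symm), SetLike.coe_injective (hZ.trans hΦ.symm), hZ⟩
end

section
/- Let m be a positive integer, let F be a finite field with 2^m elements, and let P be a polynomial over F of degree at most 2^m − 1, with coefficients c_i for i = 0,…,2^m−1. Then the function F × F → F, (x,y) ↦ P(x+y) + P(x) + P(y), is biadditive (i.e., additive in each argument separately) and not identically zero if and only if c_0 = 0, for each i ∈ {1,…,2^m−1} with c_i ≠ 0 the number i has at most two nonzero binary digits, and there exists an i ∈ {1,…,2^m−1} with exactly two nonzero binary digits such that c_i ≠ 0. -/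
open Polynomial

set_option linter.unusedSectionVars false

section Wt

private def wt (n : ℕ) : ℕ := (Nat.digits 2 n).sum

private lemma wt_def (n : ℕ) : wt n = (Nat.digits 2 n).sum := rfl

private lemma wt_zero : wt 0 = 0 := by unfold wt; simp

private lemma wt_two_mul (n : ℕ) : wt (2 * n) = wt n := by
  rcases Nat.eq_zero_or_pos n with rfl | hn
  · rfl
  · unfold wt
    rw [Nat.digits_def' (by norm_num) (by omega)]
    simp [Nat.mul_div_cancel_left _ (by norm_num : 0 < 2), Nat.mul_mod_right]

private lemma wt_two_mul_add_one (n : ℕ) : wt (2 * n + 1) = wt n + 1 := by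
  unfold wt
  rw [Nat.digits_def' (by norm_num) (by omega)]
  simp [Nat.add_mul_div_left, Nat.add_mul_mod_self_left, Nat.add_comm]

private lemma wt_eq_zero_iff (n : ℕ) : wt n = 0 ↔ n = 0 := by
  induction n using Nat.strong_induction_on with
  | _ n ih =>
    obtain ⟨k, rfl | rfl⟩ := Nat.even_or_odd' n
    · rcases Nat.eq_zero_or_pos k with rfl | hk
      · simp [wt_zero]
      · rw [wt_two_mul, ih k (by omega)]
        omega
    · rw [wt_two_mul_add_one]
      omega

private lemma wt_eq_one (n : ℕ) (h : wt n = 1) : ∃ a, n = 2 ^ a := by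
  induction n using Nat.strong_induction_on with
  | _ n ih =>
    obtain ⟨k, rfl | rfl⟩ := Nat.even_or_odd' n
    · rw [wt_two_mul] at h
      have hk : k ≠ 0 := by intro h'; rw [h'] at h; simp [wt_zero] at h
      obtain ⟨a, rfl⟩ := ih k (by omega) h
      exact ⟨a + 1, by ring⟩
    · rw [wt_two_mul_add_one] at h
      have := (wt_eq_zero_iff k).mp (by omega)
      exact ⟨0, by omega⟩

private lemma wt_eq_two (n : ℕ) (h : wt n = 2) : ∃ a b, a < b ∧ n = 2 ^ a + 2 ^ b := by
  induction n using Nat.strong_induction_on with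
  | _ n ih =>
    obtain ⟨k, rfl | rfl⟩ := Nat.even_or_odd' n
    · rw [wt_two_mul] at h
      have hk : k ≠ 0 := by intro h'; rw [h'] at h; simp [wt_zero] at h
      obtain ⟨a, b, hab, rfl⟩ := ih k (by omega) h
      exact ⟨a + 1, b + 1, by omega, by ring⟩
    · rw [wt_two_mul_add_one] at h
      obtain ⟨b, rfl⟩ := wt_eq_one k (by omega)
      exact ⟨0, b + 1, by omega, by ring⟩

private lemma wt_W2 (j : ℕ) (h : 2 ≤ wt j) : ∃ b c, 1 ≤ c ∧ 2 ^ (b + 1) ∣ c ∧ j = 2 ^ b + c := by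
  induction j using Nat.strong_induction_on with
  | _ j ih =>
    obtain ⟨k, rfl | rfl⟩ := Nat.even_or_odd' j
    · rw [wt_two_mul] at h
      have hk : k ≠ 0 := by intro h'; rw [h'] at h; simp [wt_zero] at h
      obtain ⟨b, c, hc, hd, rfl⟩ := ih k (by omega) h
      exact ⟨b + 1, 2 * c, by omega, by rw [pow_succ']; exact mul_dvd_mul_left 2 hd, by ring⟩
    · rw [wt_two_mul_add_one] at h
      have hk : k ≠ 0 := by intro h'; rw [h'] at h; simp [wt_zero] at h
      exact ⟨0, 2 * k, by omega, ⟨k, by ring⟩, by ring⟩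

private lemma wt_W3 (j : ℕ) (h : 3 ≤ wt j) :
    ∃ a b c, a < b ∧ 1 ≤ c ∧ 2 ^ (b + 1) ∣ c ∧ j = 2 ^ a + 2 ^ b + c := by
  induction j using Nat.strong_induction_on with
  | _ j ih =>
    obtain ⟨k, rfl | rfl⟩ := Nat.even_or_odd' j
    · rw [wt_two_mul] at h
      have hk : k ≠ 0 := by intro h'; rw [h'] at h; simp [wt_zero] at h
      obtain ⟨a, b, c, hab, hc, hd, rfl⟩ := ih k (by omega) h
      exact ⟨a + 1, b + 1, 2 * c, by omega, by omega,
        by rw [pow_succ']; exact mul_dvd_mul_left 2 hd, by ring⟩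
    · rw [wt_two_mul_add_one] at h
      obtain ⟨b, c, hc, hd, rfl⟩ := wt_W2 k (by omega)
      exact ⟨0, b + 1, 2 * c, by omega, by omega,
        by rw [pow_succ']; exact mul_dvd_mul_left 2 hd, by ring⟩

end Wt

section ChooseParity

private lemma lucas2 (n k : ℕ) :
    ((n.choose k : ZMod 2)) =
      ((n % 2).choose (k % 2) : ZMod 2) * ((n / 2).choose (k / 2) : ZMod 2) := by
  haveI : Fact (Nat.Prime 2) := ⟨Nat.prime_two⟩
  have := @Choose.choose_modEq_choose_mod_mul_choose_div_nat n k 2 _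
  have h := (ZMod.natCast_eq_natCast_iff _ _ _).mpr this
  rw [h]
  push_cast
  ring

private lemma choose_odd_of_disj : ∀ (e n k : ℕ), k < 2 ^ e → 2 ^ e ∣ n →
    (((n + k).choose k : ZMod 2)) = 1 := by
  intro e
  induction e with
  | zero =>
    intro n k hk _
    interval_cases k
    simp
  | succ e ih =>
    intro n k hk hn
    obtain ⟨n', rfl⟩ := hn
    have hsplit : 2 ^ (e + 1) * n' = 2 * (2 ^ e * n') := by rw [pow_succ']; ring
    rw [hsplit]
    obtain ⟨k', rfl | rfl⟩ := Nat.even_or_odd' k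
    · rw [lucas2]
      have h1 : (2 * (2 ^ e * n') + 2 * k') % 2 = 0 := by omega
      have h2 : (2 * k') % 2 = 0 := by omega
      have h3 : (2 * (2 ^ e * n') + 2 * k') / 2 = 2 ^ e * n' + k' := by omega
      have h4 : (2 * k') / 2 = k' := by omega
      rw [h1, h2, h3, h4]
      simpa using ih (2 ^ e * n') k' (by omega) ⟨n', rfl⟩
    · rw [lucas2]
      have h1 : (2 * (2 ^ e * n') + (2 * k' + 1)) % 2 = 1 := by omega
      have h2 : (2 * k' + 1) % 2 = 1 := by omega
      have h3 : (2 * (2 ^ e * n') + (2 * k' + 1)) / 2 = 2 ^ e * n' + k' := by omega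
      have h4 : (2 * k' + 1) / 2 = k' := by omega
      rw [h1, h2, h3, h4]
      simpa using ih (2 ^ e * n') k' (by omega) ⟨n', rfl⟩

private lemma cast_choose_eq_one {F : Type*} [Field F] (h2 : (2 : F) = 0) (n : ℕ)
    (h : (n : ZMod 2) = 1) : (n : F) = 1 := by
  have hm : n % 2 = 1 := by
    rcases Nat.mod_two_eq_zero_or_one n with h0 | h1
    · rw [show (n : ZMod 2) = ((n % 2 : ℕ) : ZMod 2) by simp [ZMod.natCast_mod], h0] at h
      exact absurd h (by decide)
    · exact h1
  obtain ⟨q, hq⟩ : ∃ q, n = 2 * q + 1 := ⟨n / 2, by omega⟩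
  rw [hq]
  push_cast
  rw [h2]
  ring

end ChooseParity

section Engine
variable {F : Type*} [Field F] [Fintype F] [CharP F 2]

private lemma lag (f : F[X]) (hd : f.natDegree < Fintype.card F) (h : ∀ x, f.eval x = 0) :
    f = 0 :=
  Polynomial.eq_zero_of_natDegree_lt_card_of_eval_eq_zero f Function.injective_id h
    (by simpa using hd)

private lemma natDegree_Q_le (P : F[X]) (y : F) :
    (taylor y P + P + C (P.eval y)).natDegree ≤ P.natDegree := by
  refine le_trans (natDegree_add_le _ _) ?_
  simp only [natDegree_C, max_le_iff]
  refine ⟨le_trans (natDegree_add_le _ _) ?_, Nat.zero_le _⟩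
  simp [natDegree_taylor]

private lemma eval_Q (P : F[X]) (y x : F) :
    (taylor y P + P + C (P.eval y)).eval x = P.eval (x + y) + P.eval x + P.eval y := by
  simp [taylor_eval]

private lemma coeff_Q (P : F[X]) (y : F) (i : ℕ) (hi : 1 ≤ i) :
    (taylor y P + P + C (P.eval y)).coeff i = (hasseDeriv i P).eval y + P.coeff i := by
  simp [coeff_add, taylor_coeff, coeff_C, Nat.one_le_iff_ne_zero.mp hi]

private lemma H1 (P : F[X]) (hd : P.natDegree < Fintype.card F) (i : ℕ)
    (h : ∀ y : F, (hasseDeriv i P).eval y = P.coeff i) (u : ℕ) (hu : 1 ≤ u) :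
    (((u + i).choose i : F)) * P.coeff (u + i) = 0 := by
  have hz : hasseDeriv i P - C (P.coeff i) = 0 := by
    apply lag
    · refine lt_of_le_of_lt (le_trans (natDegree_sub_le _ _) ?_) hd
      simp only [natDegree_C, max_le_iff]
      exact ⟨le_trans (natDegree_hasseDeriv_le _ _) (Nat.sub_le _ _), Nat.zero_le _⟩
    · intro x; simp [h x]
  have hc := congrArg (fun q => Polynomial.coeff q u) hz
  simp only [coeff_sub, coeff_C, hasseDeriv_coeff, coeff_zero] at hc
  rw [if_neg (by omega)] at hc
  linear_combination hc

private lemma Hcond (P : F[X]) (hd : P.natDegree < Fintype.card F)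
    (hfun : ∀ x y : F, P.eval (x + y) + P.eval x + P.eval y = 0) (i : ℕ) (hi : 1 ≤ i) (y : F) :
    (hasseDeriv i P).eval y = P.coeff i := by
  have h2 : (2 : F) = 0 := CharTwo.two_eq_zero
  have hQ0 : taylor y P + P + C (P.eval y) = 0 :=
    lag _ (lt_of_le_of_lt (natDegree_Q_le P y) hd) (fun x => by rw [eval_Q]; exact hfun x y)
  have hc := congrArg (fun q => Polynomial.coeff q i) hQ0
  simp only [coeff_zero] at hc
  rw [coeff_Q P y i hi] at hc
  linear_combination hc - P.coeff i * h2

private lemma additive_coeff (f : F[X]) (hd : f.natDegree < Fintype.card F)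
    (hadd : ∀ x₁ x₂ : F, f.eval (x₁ + x₂) = f.eval x₁ + f.eval x₂) (s t : ℕ)
    (hs : 1 ≤ s) (ht : 1 ≤ t) : ((s + t).choose t : F) * f.coeff (s + t) = 0 := by
  have h2 : (2 : F) = 0 := CharTwo.two_eq_zero
  have hfun : ∀ x y : F, f.eval (x + y) + f.eval x + f.eval y = 0 := fun x y => by
    rw [hadd]
    linear_combination (f.eval x + f.eval y) * h2
  exact H1 f hd t (Hcond f hd hfun t ht) s hs

private lemma coeff_eq_zero_of_wt_ge_three (P : F[X]) (hd : P.natDegree < Fintype.card F)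
    (hyp1 : ∀ x₁ x₂ y : F,
      P.eval (x₁ + x₂ + y) + P.eval (x₁ + x₂) + P.eval y =
        (P.eval (x₁ + y) + P.eval x₁ + P.eval y) + (P.eval (x₂ + y) + P.eval x₂ + P.eval y))
    (j : ℕ) (hj : 3 ≤ wt j) : P.coeff j = 0 := by
  have h2 : (2 : F) = 0 := CharTwo.two_eq_zero
  obtain ⟨a, b, c, hab, hc, hdvd, rfl⟩ := wt_W3 j hj
  set i : ℕ := 2 ^ a + 2 ^ b with hi
  have hi1 : 1 ≤ i := by have := Nat.one_le_two_pow (n := a); omega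
  have hstep : ∀ y : F, (hasseDeriv i P).eval y = P.coeff i := by
    intro y
    set f : F[X] := taylor y P + P + C (P.eval y) with hf
    have hdf : f.natDegree < Fintype.card F := lt_of_le_of_lt (natDegree_Q_le P y) hd
    have hadd : ∀ x₁ x₂ : F, f.eval (x₁ + x₂) = f.eval x₁ + f.eval x₂ := by
      intro x₁ x₂
      rw [hf, eval_Q, eval_Q, eval_Q]
      exact hyp1 x₁ x₂ y
    have h := additive_coeff f hdf hadd (2 ^ b) (2 ^ a) (Nat.one_le_two_pow) (Nat.one_le_two_pow)
    rw [Nat.add_comm (2 ^ b) (2 ^ a), ← hi] at h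
    rw [cast_choose_eq_one h2 _ (by
      rw [hi, Nat.add_comm (2 ^ a) (2 ^ b)]
      exact choose_odd_of_disj (a + 1) (2 ^ b) (2 ^ a)
        (by exact Nat.pow_lt_pow_right (by norm_num) (by omega))
        (pow_dvd_pow 2 (by omega))), one_mul] at h
    rw [hf, coeff_Q P y i hi1] at h
    linear_combination h - P.coeff i * h2
  have h := H1 P hd i hstep c hc
  rw [cast_choose_eq_one h2 _ (by
    refine choose_odd_of_disj (b + 1) c i ?_ hdvd
    have hlt : 2 ^ a < 2 ^ b := Nat.pow_lt_pow_right (by norm_num) hab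
    have : 2 ^ (b + 1) = 2 ^ b + 2 ^ b := by rw [pow_succ]; omega
    omega), one_mul] at h
  rw [show c + i = 2 ^ a + 2 ^ b + c by omega] at h
  exact h

end Engine

section Mono
variable {F : Type*} [Field F] [CharP F 2]

private lemma mono1 (a : ℕ) (x₁ x₂ y : F) :
    (x₁ + x₂ + y) ^ 2 ^ a + (x₁ + x₂) ^ 2 ^ a + y ^ 2 ^ a =
      ((x₁ + y) ^ 2 ^ a + x₁ ^ 2 ^ a + y ^ 2 ^ a) +
      ((x₂ + y) ^ 2 ^ a + x₂ ^ 2 ^ a + y ^ 2 ^ a) := by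
  haveI : Fact (Nat.Prime 2) := ⟨Nat.prime_two⟩
  have h2 : (2 : F) = 0 := CharTwo.two_eq_zero
  simp only [add_pow_char_pow]
  linear_combination (-(y ^ 2 ^ a)) * h2

private lemma mono2 (a b : ℕ) (x₁ x₂ y : F) :
    (x₁ + x₂ + y) ^ (2 ^ a + 2 ^ b) + (x₁ + x₂) ^ (2 ^ a + 2 ^ b) + y ^ (2 ^ a + 2 ^ b) =
      ((x₁ + y) ^ (2 ^ a + 2 ^ b) + x₁ ^ (2 ^ a + 2 ^ b) + y ^ (2 ^ a + 2 ^ b)) +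
      ((x₂ + y) ^ (2 ^ a + 2 ^ b) + x₂ ^ (2 ^ a + 2 ^ b) + y ^ (2 ^ a + 2 ^ b)) := by
  haveI : Fact (Nat.Prime 2) := ⟨Nat.prime_two⟩
  have h2 : (2 : F) = 0 := CharTwo.two_eq_zero
  simp only [pow_add, add_pow_char_pow]
  linear_combination (x₁ ^ 2 ^ a * x₂ ^ 2 ^ b + x₂ ^ 2 ^ a * x₁ ^ 2 ^ b -
    y ^ 2 ^ a * y ^ 2 ^ b) * h2

end Mono

/-- Characterization of the polynomials `P` over `𝔽_{2^m}` of degree at most `2^m - 1`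
such that `(x, y) ↦ P(x+y) + P(x) + P(y)` is biadditive and not identically zero, in terms
of the binary digits of the indices of the nonzero coefficients of `P`. -/
theorem biadditive_induced_form_iff_coeffs
    (m : ℕ) (hm : 0 < m) (F : Type*) [Field F] [Fintype F]
    (hF : Fintype.card F = 2 ^ m) (P : Polynomial F) (hdeg : P.natDegree ≤ 2 ^ m - 1) :
    ((∀ x₁ x₂ y : F,
        Polynomial.eval (x₁ + x₂ + y) P + Polynomial.eval (x₁ + x₂) P + Polynomial.eval y P =
          (Polynomial.eval (x₁ + y) P + Polynomial.eval x₁ P + Polynomial.eval y P) +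
          (Polynomial.eval (x₂ + y) P + Polynomial.eval x₂ P + Polynomial.eval y P)) ∧
      (∀ x y₁ y₂ : F,
        Polynomial.eval (x + (y₁ + y₂)) P + Polynomial.eval x P + Polynomial.eval (y₁ + y₂) P =
          (Polynomial.eval (x + y₁) P + Polynomial.eval x P + Polynomial.eval y₁ P) +
          (Polynomial.eval (x + y₂) P + Polynomial.eval x P + Polynomial.eval y₂ P)) ∧
      ¬ (∀ x y : F,
        Polynomial.eval (x + y) P + Polynomial.eval x P + Polynomial.eval y P = 0)) ↔
    (P.coeff 0 = 0 ∧
      (∀ i : ℕ, 1 ≤ i → i ≤ 2 ^ m - 1 → P.coeff i ≠ 0 → (Nat.digits 2 i).sum ≤ 2) ∧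
      (∃ i : ℕ, 1 ≤ i ∧ i ≤ 2 ^ m - 1 ∧ (Nat.digits 2 i).sum = 2 ∧ P.coeff i ≠ 0)) := by
  classical
  have hq2 : 2 ≤ 2 ^ m := by
    calc 2 = 2 ^ 1 := (pow_one 2).symm
    _ ≤ 2 ^ m := Nat.pow_le_pow_right (by norm_num) hm
  have hdlt : P.natDegree < Fintype.card F := by rw [hF]; omega
  have h2 : (2 : F) = 0 := by
    have hc : ((Fintype.card F : ℕ) : F) = 0 := FiniteField.cast_card_eq_zero F
    rw [hF] at hc
    push_cast at hc
    exact pow_eq_zero_iff (by omega) |>.mp hc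
  haveI hchar : CharP F 2 := CharTwo.of_one_ne_zero_of_two_eq_zero one_ne_zero h2
  haveI : Fact (Nat.Prime 2) := ⟨Nat.prime_two⟩
  have heval : ∀ z : F, P.eval z = ∑ i ∈ P.support, P.coeff i * z ^ i := fun z => by
    rw [Polynomial.eval_eq_sum, Polynomial.sum_def]
  constructor
  · rintro ⟨hyp1, _hyp2, hyp3⟩
    have hc0 : P.coeff 0 = 0 := by
      have h := hyp1 0 0 0
      simp only [add_zero] at h
      rw [Polynomial.coeff_zero_eq_eval_zero]
      linear_combination -h - P.eval 0 * h2
    have hwt3 : ∀ j, 3 ≤ wt j → P.coeff j = 0 := fun j hj =>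
      coeff_eq_zero_of_wt_ge_three P hdlt hyp1 j hj
    refine ⟨hc0, ?_, ?_⟩
    · intro i _ _ hci
      by_contra hgt
      exact hci (hwt3 i (by rw [wt_def]; omega))
    · by_contra hex
      push_neg at hex
      apply hyp3
      intro x y
      rw [heval, heval, heval, ← Finset.sum_add_distrib, ← Finset.sum_add_distrib]
      apply Finset.sum_eq_zero
      intro i hi
      have hci : P.coeff i ≠ 0 := Polynomial.mem_support_iff.mp hi
      have hine : i ≠ 0 := fun h => hci (h ▸ hc0)
      have hile : i ≤ 2 ^ m - 1 := le_trans (Polynomial.le_natDegree_of_mem_supp i hi) hdeg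
      have hwle : wt i ≤ 2 := by
        by_contra hgt
        exact hci (hwt3 i (by omega))
      have hwne : wt i ≠ 2 := fun hw2 => hci (hex i (by omega) hile hw2)
      have hw0 : wt i ≠ 0 := fun hw0 => hine ((wt_eq_zero_iff i).mp hw0)
      obtain ⟨a, rfl⟩ := wt_eq_one i (by omega)
      rw [add_pow_char_pow]
      linear_combination (P.coeff (2 ^ a) * (x ^ 2 ^ a + y ^ 2 ^ a)) * h2
  · rintro ⟨h0, hw, i₀, hi₀1, hi₀2, hwt₀, hc₀⟩
    have key1 : ∀ x₁ x₂ y : F,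
        Polynomial.eval (x₁ + x₂ + y) P + Polynomial.eval (x₁ + x₂) P + Polynomial.eval y P =
          (Polynomial.eval (x₁ + y) P + Polynomial.eval x₁ P + Polynomial.eval y P) +
          (Polynomial.eval (x₂ + y) P + Polynomial.eval x₂ P + Polynomial.eval y P) := by
      intro x₁ x₂ y
      simp only [heval]
      simp only [← Finset.sum_add_distrib]
      apply Finset.sum_congr rfl
      intro i hi
      have hci : P.coeff i ≠ 0 := Polynomial.mem_support_iff.mp hi
      have hine : i ≠ 0 := fun h => hci (h ▸ h0)
      have hile : i ≤ 2 ^ m - 1 := le_trans (Polynomial.le_natDegree_of_mem_supp i hi) hdeg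
      have hwle : wt i ≤ 2 := hw i (by omega) hile hci
      have hw0 : wt i ≠ 0 := fun hw0 => hine ((wt_eq_zero_iff i).mp hw0)
      rcases (show wt i = 1 ∨ wt i = 2 by omega) with h1 | h1
      · obtain ⟨a, rfl⟩ := wt_eq_one i h1
        linear_combination (P.coeff (2 ^ a)) * mono1 a x₁ x₂ y
      · obtain ⟨a, b, hab, rfl⟩ := wt_eq_two i h1
        linear_combination (P.coeff (2 ^ a + 2 ^ b)) * mono2 a b x₁ x₂ y
    refine ⟨key1, ?_, ?_⟩
    · intro x y₁ y₂
      have h := key1 y₁ y₂ x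
      rw [add_comm x (y₁ + y₂), add_comm x y₁, add_comm x y₂]
      linear_combination h
    · intro hB
      obtain ⟨a, b, hab, hi₀⟩ := wt_eq_two i₀ hwt₀
      have h := H1 P hdlt (2 ^ a) (Hcond P hdlt hB (2 ^ a) Nat.one_le_two_pow) (2 ^ b)
        Nat.one_le_two_pow
      rw [cast_choose_eq_one h2 _ (choose_odd_of_disj (a + 1) (2 ^ b) (2 ^ a)
        (Nat.pow_lt_pow_right (by norm_num) (by omega))
        (pow_dvd_pow 2 (by omega))), one_mul] at h
      rw [Nat.add_comm (2 ^ b) (2 ^ a), ← hi₀] at h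
      exact hc₀ h
end

section
/- Let p be a prime, m a positive integer, F a finite field with p^m elements, and ω a generator of the cyclic group F^×. Let ΓL₁(p^m) denote the subgroup of the permutation group of F generated by the Frobenius map x ↦ x^p and the multiplication map x ↦ ω·x. If C is a cyclic subgroup of ΓL₁(p^m) that acts transitively on F \ {0}, then C equals the subgroup consisting of all multiplication maps x ↦ c·x with c ∈ F^×. -/
/-!
Every element `g` of `ΓL₁` is semilinear: `g (x * y) = σ x * g y` for a field automorphism `σ`.
If `t` is the order of `σ` and `K` its fixed field, then `g ^ t` is multiplication by an element
of `Kˣ`, so the order of `g` divides `t (|K| - 1)`. If the cyclic group generated by `g` is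
transitive on `F \ {0}`, its order is at least `|F| - 1 = |K| ^ t - 1` (Artin), and
`t (q - 1) < q ^ t - 1` for `q, t ≥ 2`; hence `σ = 1`, every element of `C` is a multiplication
map, and transitivity gives all of them.
-/

open Equiv Subgroup

instance RingEquiv.applyFaithfulSMul (R : Type*) [Semiring R] : FaithfulSMul (R ≃+* R) R :=
  ⟨fun h => RingEquiv.ext h⟩

theorem Nat.mul_sub_one_lt_pow_sub_one {q t : ℕ} (hq : 2 ≤ q) (ht : 2 ≤ t) :
    t * (q - 1) < q ^ t - 1 := by
  induction t, ht using Nat.le_induction with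
  | base =>
    have h1 : 2 * (q - 1) < (q + 1) * (q - 1) := Nat.mul_lt_mul_of_pos_right (by omega) (by omega)
    rwa [← Nat.sq_sub_sq, one_pow] at h1
  | succ t _ ih =>
    have h1 : 1 ≤ q ^ t := Nat.one_le_pow _ _ (by omega)
    have h2 : q - 1 ≤ q ^ t * (q - 1) := Nat.le_mul_of_pos_left _ h1
    have h3 : q ^ (t + 1) = q ^ t + q ^ t * (q - 1) := by
      rw [pow_succ, Nat.mul_sub_one, Nat.add_sub_cancel' (Nat.le_mul_of_pos_right _ (by omega))]
    rw [h3, Nat.succ_mul]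
    omega

theorem card_eq_card_fixedPoints_pow_orderOf {F : Type*} [Field F] [Finite F] (σ : F ≃+* F) :
    Nat.card F = Nat.card (FixedPoints.subfield (zpowers σ) F) ^ orderOf σ := by
  have : Finite (F ≃+* F) := DFunLike.finite _
  have := Fintype.ofFinite F
  have := Fintype.ofFinite (FixedPoints.subfield (zpowers σ) F)
  have := Fintype.ofFinite (zpowers σ)
  simp only [Nat.card_eq_fintype_card]
  rw [Module.card_eq_pow_finrank (K := FixedPoints.subfield (zpowers σ) F) (V := F),
    FixedPoints.finrank_eq_card, ← Nat.card_eq_fintype_card (α := zpowers σ), Nat.card_zpowers]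

theorem Subgroup.card_sub_one_le_card_of_forall_ne {α : Type*} [Finite α] (C : Subgroup (Perm α))
    (a x₀ : α) (h : ∀ y ≠ a, ∃ g ∈ C, g x₀ = y) : Nat.card α - 1 ≤ Nat.card C := by
  have hsub : ({a}ᶜ : Set α) ⊆ Set.range (fun g : C => (g : Perm α) x₀) := fun y hy => by
    obtain ⟨g, hg, rfl⟩ := h y hy
    exact ⟨⟨g, hg⟩, rfl⟩
  calc Nat.card α - 1 = ({a}ᶜ : Set α).ncard := by
        rw [Set.ncard_compl, Set.ncard_singleton]
    _ ≤ (Set.range (fun g : C => (g : Perm α) x₀)).ncard := Set.ncard_le_ncard hsub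
    _ ≤ Nat.card C := (Nat.card_coe_set_eq _).symm.trans_le (Finite.card_range_le _)

namespace Equiv.Perm

variable {F : Type*} [Field F]

/-- Additivity is not asked for: it follows from `e x = σ x * e 1`. -/
def IsSemilinear (σ : F ≃+* F) (e : Perm F) : Prop :=
  ∀ x y, e (x * y) = σ x * e y

namespace IsSemilinear

variable {σ τ : F ≃+* F} {e f : Perm F}

theorem one : IsSemilinear (1 : F ≃+* F) (1 : Perm F) := fun _ _ => rfl

theorem mul (he : IsSemilinear σ e) (hf : IsSemilinear τ f) :
    IsSemilinear (σ * τ) (e * f) := fun x y => by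
  rw [Perm.mul_apply, hf, he]
  rfl

theorem inv (he : IsSemilinear σ e) : IsSemilinear σ⁻¹ e⁻¹ := fun x y => by
  apply e.injective
  rw [he]
  simp

theorem pow (he : IsSemilinear σ e) (n : ℕ) : IsSemilinear (σ ^ n) (e ^ n) := by
  induction n with
  | zero => exact one
  | succ n ih => rw [pow_succ, pow_succ]; exact ih.mul he

theorem zpow (he : IsSemilinear σ e) (n : ℤ) : IsSemilinear (σ ^ n) (e ^ n) := by
  cases n with
  | ofNat n => exact he.pow n
  | negSucc n => rw [zpow_negSucc, zpow_negSucc]; exact (he.pow _).inv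

theorem map_zero (he : IsSemilinear σ e) : e 0 = 0 := by
  simpa using he 0 0

theorem apply_one_ne_zero (he : IsSemilinear σ e) : e 1 ≠ 0 := by
  rw [← he.map_zero]
  exact e.injective.ne one_ne_zero

theorem apply_eq_apply_one_mul (he : IsSemilinear 1 e) (x : F) : e x = e 1 * x := by
  rw [← mul_one x, he, mul_one, mul_comm]
  rfl

theorem map_eq_of_commute_of_apply_eq_mul (he : IsSemilinear σ e) {b : F}
    (hf : ∀ x, f x = b * x) (hcomm : Commute e f) : σ b = b := by
  have := congrArg (· 1) hcomm.eq
  simp only [Perm.mul_apply, hf, mul_one] at this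
  rw [← mul_one b, he, mul_one] at this
  exact mul_right_cancel₀ he.apply_one_ne_zero this

theorem pow_orderOf_apply (he : IsSemilinear σ e) (x : F) :
    (e ^ orderOf σ) x = (e ^ orderOf σ) 1 * x := by
  have := he.pow (orderOf σ)
  rw [pow_orderOf_eq_one] at this
  exact this.apply_eq_apply_one_mul x

theorem pow_apply_of_apply_eq_mul {b : F} (hf : ∀ x, f x = b * x) (n : ℕ) (x : F) :
    (f ^ n) x = b ^ n * x := by
  induction n with
  | zero => simp
  | succ n ih => rw [pow_succ', Perm.mul_apply, ih, hf, pow_succ', mul_assoc]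

theorem orderOf_dvd [Finite F] (he : IsSemilinear σ e) :
    orderOf e ∣ orderOf σ * (Nat.card (FixedPoints.subfield (zpowers σ) F) - 1) := by
  set b := (e ^ orderOf σ) 1
  have hb : b ∈ FixedPoints.subfield (zpowers σ) F := by
    rintro ⟨τ, hτ⟩
    obtain ⟨k, rfl⟩ := mem_zpowers_iff.mp hτ
    exact MulAction.fixedBy_subset_fixedBy_zpow F σ k
      (he.map_eq_of_commute_of_apply_eq_mul he.pow_orderOf_apply (Commute.self_pow e _))
  have hb1 : b ^ (Nat.card (FixedPoints.subfield (zpowers σ) F) - 1) = 1 := by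
    have := Fintype.ofFinite (FixedPoints.subfield (zpowers σ) F)
    have h := FiniteField.pow_card_sub_one_eq_one (⟨b, hb⟩ : FixedPoints.subfield (zpowers σ) F)
      (Subtype.coe_ne_coe.mp (he.pow _).apply_one_ne_zero)
    rw [Nat.card_eq_fintype_card]
    simpa using congrArg Subtype.val h
  refine orderOf_dvd_of_pow_eq_one (Perm.ext fun x => ?_)
  rw [pow_mul, pow_apply_of_apply_eq_mul he.pow_orderOf_apply, hb1, one_mul, Perm.one_apply]

theorem eq_one_of_card_sub_one_le_orderOf [Finite F] (he : IsSemilinear σ e)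
    (h : Nat.card F - 1 ≤ orderOf e) : σ = 1 := by
  have : Finite (F ≃+* F) := DFunLike.finite _
  rw [card_eq_card_fixedPoints_pow_orderOf σ] at h
  set q := Nat.card (FixedPoints.subfield (zpowers σ) F)
  have hq : 2 ≤ q := Finite.one_lt_card
  have hle : orderOf e ≤ orderOf σ * (q - 1) :=
    Nat.le_of_dvd (Nat.mul_pos (orderOf_pos σ) (by omega)) he.orderOf_dvd
  by_contra hσ
  have hσ2 : 2 ≤ orderOf σ := by
    have := orderOf_pos σ
    have := orderOf_eq_one_iff.not.mpr hσ
    omega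
  have := Nat.mul_sub_one_lt_pow_sub_one hq hσ2
  omega

theorem exists_unit_apply_eq_mul (he : IsSemilinear 1 e) : ∃ c : Fˣ, ∀ x, e x = c * x :=
  ⟨Units.mk0 _ he.apply_one_ne_zero, he.apply_eq_apply_one_mul⟩

end IsSemilinear

end Equiv.Perm

open Equiv.Perm

def gammaL₁ (F : Type*) [Field F] : Subgroup (Perm F) where
  carrier := {e | ∃ σ : F ≃+* F, IsSemilinear σ e}
  mul_mem' := fun ⟨σ, he⟩ ⟨τ, hf⟩ => ⟨σ * τ, he.mul hf⟩
  one_mem' := ⟨1, IsSemilinear.one⟩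
  inv_mem' := fun ⟨σ, he⟩ => ⟨σ⁻¹, he.inv⟩

theorem closure_frobenius_mul_le_gammaL₁ (F : Type*) [Field F] (p : ℕ) [ExpChar F p] (ω : F) :
    closure {e : Perm F | (∀ x, e x = x ^ p) ∨ (∀ x, e x = ω * x)} ≤ gammaL₁ F := by
  refine closure_le _ |>.mpr ?_
  rintro e (h | h)
  · have hbij : Function.Bijective (frobenius F p) := by
      convert e.bijective
      exact funext fun x => (h x).symm
    exact ⟨RingEquiv.ofBijective _ hbij, fun x y => by rw [h, h, mul_pow]; rfl⟩
  · exact ⟨1, fun x y => by rw [h, h, mul_left_comm]; rfl⟩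

theorem cyclic_transitive_subgroup_of_gammaL_one_general
    (p m : ℕ) (hp : p.Prime) (F : Type*) [Field F] [Fintype F]
    (hF : Fintype.card F = p ^ m) (ω : Fˣ)
    (C : Subgroup (Equiv.Perm F)) (hcyc : IsCyclic C)
    (hle : C ≤ Subgroup.closure {e : Equiv.Perm F |
        (∀ x : F, e x = x ^ p) ∨ (∀ x : F, e x = (ω : F) * x)})
    (htrans : ∀ x y : F, x ≠ 0 → y ≠ 0 → ∃ g ∈ C, g x = y) :
    (C : Set (Equiv.Perm F)) =
      {e : Equiv.Perm F | ∃ c : Fˣ, ∀ x : F, e x = (c : F) * x} := by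
  have : Fact p.Prime := ⟨hp⟩
  have : CharP F p := charP_of_card_eq_prime_pow hF
  obtain ⟨g, hg⟩ := hcyc.exists_generator
  obtain ⟨σ, hσ⟩ := closure_frobenius_mul_le_gammaL₁ F p ω (hle g.2)
  obtain rfl : σ = 1 := by
    refine hσ.eq_one_of_card_sub_one_le_orderOf ?_
    rw [Subgroup.orderOf_coe, orderOf_eq_card_of_forall_mem_zpowers hg]
    exact C.card_sub_one_le_card_of_forall_ne 0 1 fun y hy => htrans 1 y one_ne_zero hy
  have hC : ∀ h ∈ C, IsSemilinear 1 h := fun h hh => by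
    obtain ⟨k, hk⟩ := mem_zpowers_iff.mp (hg ⟨h, hh⟩)
    rw [← show (g : Perm F) ^ k = h from congrArg Subtype.val hk, ← one_zpow k]
    exact hσ.zpow k
  ext e
  refine ⟨fun he => (hC e he).exists_unit_apply_eq_mul, ?_⟩
  rintro ⟨u, hu⟩
  obtain ⟨h, hh, h1⟩ := htrans 1 u one_ne_zero u.ne_zero
  have : h = e := Perm.ext fun x => by rw [(hC h hh).apply_eq_apply_one_mul, h1, hu]
  exact this ▸ hh

/-- The only cyclic subgroup of `ΓL₁(p^m)` (viewed inside the permutation group of the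
finite field `F` with `p^m` elements, generated by the Frobenius `x ↦ x^p` and multiplication
by a generator `ω` of `F^×`) acting transitively on the nonzero elements of `F` is the
subgroup of all multiplication maps `x ↦ c·x`, `c ∈ F^×`. -/
theorem cyclic_transitive_subgroup_of_gammaL_one
    (p m : ℕ) (hp : p.Prime) (hm : 0 < m) (F : Type*) [Field F] [Fintype F]
    (hF : Fintype.card F = p ^ m) (ω : Fˣ) (hω : ∀ x : Fˣ, x ∈ Subgroup.zpowers ω)
    (C : Subgroup (Equiv.Perm F)) (hcyc : IsCyclic C)
    (hle : C ≤ Subgroup.closure {e : Equiv.Perm F |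
        (∀ x : F, e x = x ^ p) ∨ (∀ x : F, e x = (ω : F) * x)})
    (htrans : ∀ x y : F, x ≠ 0 → y ≠ 0 → ∃ g ∈ C, g x = y) :
    (C : Set (Equiv.Perm F)) =
      {e : Equiv.Perm F | ∃ c : Fˣ, ∀ x : F, e x = (c : F) * x} :=
  cyclic_transitive_subgroup_of_gammaL_one_general p m hp F hF ω C hcyc hle htrans
end

section
/- Let p be a prime, m a positive integer, F a finite field with p^m elements, and ω a generator of F^×. Let d, e, s be integers with d ≥ 2, d ∣ p^m − 1, s ≥ 1, s ∣ m, 0 ≤ e ≤ d − 1, and d ∣ e·(p^m−1)/(p^s−1). Let A be the subgroup of the permutation group of F generated by the maps x ↦ ω^e·x^{p^s} and x ↦ ω^d·x. Then A acts transitively on F \ {0} if and only if the following all hold: e > 0, gcd(d, e) = 1, every prime divisor of d divides p^s − 1, and if 4 ∣ d then 4 ∣ p^s − 1. -/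
/-!
Every element of the group generated by `τ : x ↦ ω ^ e * x ^ q` (with `q = p ^ s`) and
`μ : x ↦ ω ^ d * x` has the form `x ↦ ω ^ (e * (1 + q + ⋯ + q ^ (j - 1)) + d * t) * x ^ q ^ j`,
and all of these occur (`μ ^ t * τ ^ j`). As `d` divides the order of `ω`, the group is transitive
on `Fˣ` iff the exponents `e * (1 + q + ⋯ + q ^ (j - 1))`, the terms of the linear congruential
sequence `x ↦ q * x + e`, run through all residues mod `d`. The Hull–Dobell theorem characterizes
this; its sufficiency rests on the lifting-the-exponent lemma, which gives
`v_r (1 + q + ⋯ + q ^ (l - 1)) = v_r l` when `r ∣ q - 1` (and `4 ∣ q - 1` if `r = 2`).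
-/

open Finset Function Equiv

/-- The `j`-th term of the linear congruential sequence `x ↦ q * x + e` started at `0`. -/
def lcg (q e j : ℕ) : ℕ := e * ∑ i ∈ range j, q ^ i

@[simp] lemma lcg_zero (q e : ℕ) : lcg q e 0 = 0 := by simp [lcg]

@[simp] lemma lcg_one (q e : ℕ) : lcg q e 1 = e := by simp [lcg]

lemma lcg_add (q e j k : ℕ) : lcg q e (j + k) = lcg q e j + q ^ j * lcg q e k := by
  simp only [lcg, sum_range_add, pow_add, ← mul_sum]
  ring

lemma emultiplicity_pow_sub_one {r : ℕ} (hr : r.Prime) {q : ℤ} (hq : (r : ℤ) ∣ q - 1)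
    (h2 : r = 2 → 4 ∣ q - 1) (l : ℕ) :
    emultiplicity (r : ℤ) (q ^ l - 1) =
      emultiplicity (r : ℤ) (q - 1) + emultiplicity (r : ℤ) l := by
  have hrq : ¬ (r : ℤ) ∣ q := fun h => by
    have : (r : ℤ) ∣ 1 := by simpa using dvd_sub h hq
    exact hr.one_lt.ne' (by exact_mod_cast Int.eq_one_of_dvd_one (by positivity) this)
  rcases hr.eq_two_or_odd' with rfl | hodd
  · simpa using Int.two_pow_sub_pow' l (h2 rfl) hrq
  · simpa [Int.natCast_emultiplicity] using Int.emultiplicity_pow_sub_pow hr hodd hq hrq l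

lemma emultiplicity_geom_sum {r : ℕ} (hr : r.Prime) {q : ℤ} (hq : (r : ℤ) ∣ q - 1)
    (h2 : r = 2 → 4 ∣ q - 1) (l : ℕ) :
    emultiplicity (r : ℤ) (∑ i ∈ range l, q ^ i) = emultiplicity (r : ℤ) l := by
  rcases eq_or_ne q 1 with rfl | hq1
  · simp
  have hfin : emultiplicity (r : ℤ) (q - 1) ≠ ⊤ :=
    finiteMultiplicity_iff_emultiplicity_ne_top.1 <|
      Int.finiteMultiplicity_iff.2 ⟨by simpa using hr.ne_one, sub_ne_zero.2 hq1⟩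
  have h := emultiplicity_pow_sub_one hr hq h2 l
  rw [← geom_sum_mul, emultiplicity_mul (Nat.prime_iff_prime_int.1 hr), add_comm] at h
  exact WithTop.add_left_cancel hfin h

lemma dvd_of_dvd_geom_sum {d : ℕ} {q : ℤ} (hq : ∀ r, r.Prime → r ∣ d → (r : ℤ) ∣ q - 1)
    (h4 : 4 ∣ d → 4 ∣ q - 1) {l : ℕ} (h : (d : ℤ) ∣ ∑ i ∈ range l, q ^ i) : d ∣ l := by
  refine (Nat.dvd_iff_prime_pow_dvd_dvd l d).2 fun r k hr hrk => ?_
  rcases k.eq_zero_or_pos with rfl | hk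
  · simp
  have hrq : (r : ℤ) ∣ q - 1 := hq r hr ((dvd_pow_self r hk.ne').trans hrk)
  have hrS : (r : ℤ) ^ k ∣ ∑ i ∈ range l, q ^ i := by
    exact_mod_cast (Int.natCast_dvd_natCast.2 hrk).trans h
  by_cases h2 : r = 2 → 4 ∣ q - 1
  · rw [pow_dvd_iff_le_emultiplicity, emultiplicity_geom_sum hr hrq h2,
      ← pow_dvd_iff_le_emultiplicity] at hrS
    exact_mod_cast hrS
  · -- `r = 2` and `4 ∤ d`, so `k = 1`, and `∑ i ∈ range l, q ^ i ≡ l [ZMOD q - 1]` suffices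
    obtain ⟨rfl, hq4⟩ := Classical.not_imp.1 h2
    have hk1 : k = 1 := by
      by_contra hk1
      exact hq4 (h4 ((pow_dvd_pow 2 (by omega : 2 ≤ k)).trans hrk))
    subst hk1
    have h2l := (dvd_geom_sum₂_iff_of_dvd_sub (n := l) (y := 1) hrq).1
      (by simpa [geom_sum₂_with_one] using hrS)
    exact_mod_cast (by simpa using h2l : ((2 : ℕ) : ℤ) ∣ l)

section HullDobell

variable {q e : ℕ}

lemma surjective_lcg_of_dvd {d r : ℕ} (hrd : r ∣ d)
    (hs : Surjective fun j => (lcg q e j : ZMod d)) :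
    Surjective fun j => (lcg q e j : ZMod r) := by
  intro w
  obtain ⟨v, rfl⟩ := ZMod.ringHom_surjective (ZMod.castHom hrd (ZMod r)) w
  obtain ⟨j, rfl⟩ := hs v
  exact ⟨j, by simp⟩

lemma coprime_of_surjective_lcg {d : ℕ} (hs : Surjective fun j => (lcg q e j : ZMod d)) :
    d.Coprime e := by
  obtain ⟨j, hj⟩ := hs 1
  have : IsUnit (e : ZMod d) := IsUnit.of_mul_eq_one _ (by simpa [lcg] using hj)
  exact ((ZMod.isUnit_iff_coprime e d).1 this).symm

lemma dvd_sub_one_of_surjective_lcg {r : ℕ} [Fact r.Prime] (hqr : q.Coprime r)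
    (hs : Surjective fun j => (lcg q e j : ZMod r)) : (r : ℤ) ∣ q - 1 := by
  by_contra hrq
  have hq1 : (q : ZMod r) ≠ 1 := by
    rwa [← Int.cast_natCast, ← Int.cast_one, Ne, ZMod.intCast_eq_intCast_iff_dvd_sub,
      ← dvd_neg, neg_sub]
  have hq0 : (q : ZMod r) ≠ 0 := ((ZMod.isUnit_iff_coprime q r).2 hqr).ne_zero
  have he0 : (e : ZMod r) ≠ 0 :=
    ((ZMod.isUnit_iff_coprime e r).2 (coprime_of_surjective_lcg hs).symm).ne_zero
  -- `x ↦ q * x + e` fixes `-c`, which therefore lies outside the orbit `c * q ^ j - c` of `0`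
  set c := (e : ZMod r) / (q - 1)
  have hc : c ≠ 0 := div_ne_zero he0 (sub_ne_zero.2 hq1)
  obtain ⟨j, hj : (lcg q e j : ZMod r) = -c⟩ := hs (-c)
  have hval : (lcg q e j : ZMod r) = c * q ^ j - c := by
    have hce : c * (q - 1) = e := div_mul_cancel₀ _ (sub_ne_zero.2 hq1)
    rw [← mul_sub_one, ← geom_sum_mul, lcg]
    push_cast
    rw [← hce]
    ring
  rw [hval, sub_eq_neg_self, mul_eq_zero] at hj
  exact hj.elim hc (pow_ne_zero j hq0)

lemma four_dvd_sub_one_of_surjective_lcg (hq2 : (2 : ℤ) ∣ q - 1)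
    (hs : Surjective fun j => (lcg q e j : ZMod 4)) : (4 : ℤ) ∣ q - 1 := by
  by_contra hq4
  have hq : (q : ZMod 4) = -1 := by
    rw [← ZMod.natCast_mod, show q % 4 = 3 by omega]
    rfl
  have hval : ∀ j, (lcg q e j : ZMod 4) = if Even j then 0 else (e : ZMod 4) := by
    intro j
    simp only [lcg, Nat.cast_mul, Nat.cast_sum, Nat.cast_pow, hq, neg_one_geom_sum]
    split_ifs <;> simp
  obtain ⟨j₁, hj₁ : (lcg q e j₁ : ZMod 4) = 1⟩ := hs 1
  obtain ⟨j₂, hj₂ : (lcg q e j₂ : ZMod 4) = 2⟩ := hs 2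
  rw [hval] at hj₁ hj₂
  generalize (e : ZMod 4) = E at hj₁ hj₂
  split_ifs at hj₁ hj₂ <;> subst_vars <;>
    first | exact absurd hj₁ (by decide) | exact absurd hj₂ (by decide)

lemma surjective_lcg {d : ℕ} [NeZero d] (hqd : q.Coprime d) (hed : d.Coprime e)
    (hq : ∀ r, r.Prime → r ∣ d → (r : ℤ) ∣ q - 1) (h4 : 4 ∣ d → (4 : ℤ) ∣ q - 1) :
    Surjective fun j => (lcg q e j : ZMod d) := by
  have hinj : Injective fun j : Fin d => (lcg q e j : ZMod d) := by
    suffices h : ∀ j k : Fin d, j ≤ k → (lcg q e j : ZMod d) = lcg q e k → j = k from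
      fun j k hjk => (le_total j k).elim (h j k · hjk) fun hkj => (h k j hkj hjk.symm).symm
    intro j k hjk hjk'
    obtain ⟨l, hl⟩ := Nat.exists_eq_add_of_le (Fin.le_iff_val_le_val.1 hjk)
    have hl0 : (lcg q e l : ZMod d) = 0 := by
      rw [hl, lcg_add, Nat.cast_add, left_eq_add, Nat.cast_mul, Nat.cast_pow] at hjk'
      exact (((ZMod.isUnit_iff_coprime q d).2 hqd).pow j).mul_right_eq_zero.1 hjk'
    have hS : (d : ℤ) ∣ ∑ i ∈ range l, (q : ℤ) ^ i := by
      rw [lcg, Nat.cast_mul, ((ZMod.isUnit_iff_coprime e d).2 hed.symm).mul_right_eq_zero] at hl0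
      rw [← ZMod.intCast_zmod_eq_zero_iff_dvd]
      exact_mod_cast hl0
    have := Nat.eq_zero_of_dvd_of_lt (dvd_of_dvd_geom_sum hq h4 hS) (by omega)
    exact Fin.ext (by omega)
  intro w
  obtain ⟨j, hj⟩ := ((Fintype.bijective_iff_injective_and_card _).2 ⟨hinj, by simp⟩).2 w
  exact ⟨j, hj⟩

/-- The Hull–Dobell theorem. -/
theorem surjective_lcg_iff {d : ℕ} [NeZero d] (hqd : q.Coprime d) :
    (Surjective fun j => (lcg q e j : ZMod d)) ↔
      d.Coprime e ∧ (∀ r, r.Prime → r ∣ d → (r : ℤ) ∣ q - 1) ∧ (4 ∣ d → (4 : ℤ) ∣ q - 1) := by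
  refine ⟨fun hs => ?_, fun ⟨hed, hq, h4⟩ => surjective_lcg hqd hed hq h4⟩
  have hq : ∀ r, r.Prime → r ∣ d → (r : ℤ) ∣ q - 1 := fun r hr hrd =>
    have := Fact.mk hr
    dvd_sub_one_of_surjective_lcg (hqd.coprime_dvd_right hrd) (surjective_lcg_of_dvd hrd hs)
  refine ⟨coprime_of_surjective_lcg hs, hq, fun h4 => ?_⟩
  exact four_dvd_sub_one_of_surjective_lcg
    (by exact_mod_cast hq 2 Nat.prime_two ((by norm_num : 2 ∣ 4).trans h4))
    (surjective_lcg_of_dvd h4 hs)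

end HullDobell

lemma exists_zpow_add_mul_eq_zpow_iff {G : Type*} [Group G] {g : G} {d : ℕ}
    (hd : d ∣ orderOf g) (k l : ℤ) : (∃ t : ℤ, g ^ (l + d * t) = g ^ k) ↔ (l : ZMod d) = k := by
  rw [ZMod.intCast_eq_intCast_iff_dvd_sub]
  constructor
  · rintro ⟨t, ht⟩
    have := (zpow_eq_zpow_iff_modEq.1 ht).of_dvd (Int.natCast_dvd_natCast.2 hd)
    rw [show k - l = k - (l + d * t) + d * t by ring]
    exact this.dvd.add (dvd_mul_right _ t)
  · rintro ⟨t, ht⟩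
    exact ⟨t, by rw [← ht, add_sub_cancel]⟩

lemma forall_exists_apply_eq_iff {α : Type*} {A : Subgroup (Perm α)} {P : α → Prop} {a : α}
    (ha : P a) :
    (∀ x y, P x → P y → ∃ g ∈ A, g x = y) ↔ ∀ y, P y → ∃ g ∈ A, g a = y := by
  refine ⟨fun h y hy => h a y ha hy, fun h x y hx hy => ?_⟩
  obtain ⟨g, hg, rfl⟩ := h x hx
  obtain ⟨g', hg', rfl⟩ := h y hy
  exact ⟨g' * g⁻¹, mul_mem hg' (inv_mem hg), by simp⟩

section GammaL

variable {F : Type*} [Field F] (ω : Fˣ) (q d e : ℕ)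

def gammaLGenerators : Set (Perm F) :=
  {g | (∀ x, g x = (ω : F) ^ e * x ^ q) ∨ (∀ x, g x = (ω : F) ^ d * x)}

def gammaLSubmonoid : Submonoid (Perm F) where
  carrier := {g | ∃ (j : ℕ) (t : ℤ), ∀ x, g x = ↑(ω ^ ((lcg q e j : ℤ) + d * t)) * x ^ q ^ j}
  one_mem' := ⟨0, 0, by simp⟩
  mul_mem' := by
    rintro g h ⟨j, t, hg⟩ ⟨k, u, hh⟩
    refine ⟨j + k, t + q ^ j * u, fun x => ?_⟩
    rw [Perm.mul_apply, hh, hg, mul_pow, ← pow_mul, ← pow_add, ← mul_assoc,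
      ← Units.val_pow_eq_pow_val, ← Units.val_mul, ← zpow_natCast, ← zpow_mul, ← zpow_add,
      lcg_add]
    push_cast
    ring_nf

variable {ω q d e}

lemma closure_le_gammaLSubmonoid [Finite F] :
    (Subgroup.closure (gammaLGenerators ω q d e)).toSubmonoid ≤ gammaLSubmonoid ω q d e := by
  rw [Subgroup.closure_toSubmonoid_of_finite, Submonoid.closure_le]
  rintro g (hg | hg)
  · exact ⟨1, 0, by simpa using hg⟩
  · exact ⟨0, 1, by simpa using hg⟩

lemma pow_apply_of_forall_apply_eq {τ : Perm F} (hτ : ∀ x, τ x = (ω : F) ^ e * x ^ q)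
    (j : ℕ) (x : F) : (τ ^ j) x = ↑(ω ^ lcg q e j) * x ^ q ^ j := by
  induction j generalizing x with
  | zero => simp
  | succ j ih =>
    rw [pow_succ, Perm.mul_apply, ih, hτ, lcg_add, lcg_one]
    push_cast
    ring

lemma exists_mem_closure_apply_one_eq_iff [Finite F] (hq : Bijective fun x : F => x ^ q)
    (y : F) : (∃ g ∈ Subgroup.closure (gammaLGenerators ω q d e), g 1 = y) ↔
      ∃ (j : ℕ) (t : ℤ), ↑(ω ^ ((lcg q e j : ℤ) + d * t)) = y := by
  constructor
  · rintro ⟨g, hg, rfl⟩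
    obtain ⟨j, t, hgx⟩ := closure_le_gammaLSubmonoid hg
    exact ⟨j, t, by simp [hgx]⟩
  · rintro ⟨j, t, rfl⟩
    let τ : Perm F := Units.mulLeft (ω ^ e) * Equiv.ofBijective _ hq
    let μ : Perm F := MulAction.toPermHom Fˣ F (ω ^ d)
    have hτx : ∀ x, τ x = (ω : F) ^ e * x ^ q := fun x => by simp [τ]
    have hτ : τ ∈ Subgroup.closure (gammaLGenerators ω q d e) :=
      Subgroup.subset_closure (Or.inl hτx)
    have hμ : μ ∈ Subgroup.closure (gammaLGenerators ω q d e) :=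
      Subgroup.subset_closure (Or.inr fun x => by simp [μ, Units.smul_def])
    refine ⟨μ ^ t * τ ^ j, mul_mem (zpow_mem hμ t) (pow_mem hτ j), ?_⟩
    rw [Perm.mul_apply, pow_apply_of_forall_apply_eq hτx, ← map_zpow, one_pow, mul_one,
      MulAction.toPermHom_apply, MulAction.toPerm_apply, Units.smul_def, smul_eq_mul,
      ← Units.val_mul, zpow_add, zpow_mul, zpow_natCast, zpow_natCast, mul_comm]

lemma transitive_iff_surjective_lcg [Finite F] (hq : Bijective fun x : F => x ^ q)
    (hω : ∀ x : Fˣ, x ∈ Subgroup.zpowers ω) (hd : d ∣ orderOf ω) :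
    (∀ x y : F, x ≠ 0 → y ≠ 0 → ∃ g ∈ Subgroup.closure (gammaLGenerators ω q d e), g x = y) ↔
      Surjective fun j => (lcg q e j : ZMod d) := by
  simp_rw [forall_exists_apply_eq_iff (P := (· ≠ (0 : F))) one_ne_zero,
    exists_mem_closure_apply_one_eq_iff hq]
  constructor
  · intro h w
    obtain ⟨j, t, hjt⟩ := h _ (ω ^ (w.cast : ℤ)).ne_zero
    exact ⟨j, by simpa using (exists_zpow_add_mul_eq_zpow_iff hd _ _).1 ⟨t, Units.ext hjt⟩⟩
  · intro hs y hy
    obtain ⟨k, hk⟩ := Subgroup.mem_zpowers_iff.1 (hω (Units.mk0 y hy))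
    obtain ⟨j, hj⟩ := hs k
    obtain ⟨t, ht⟩ := (exists_zpow_add_mul_eq_zpow_iff hd k (lcg q e j)).2 (by simpa using hj)
    exact ⟨j, t, by rw [ht, hk, Units.val_mk0]⟩

end GammaL

theorem gammaL_one_subgroup_transitive_iff_general
    (p m : ℕ) (hp : p.Prime) (hm : 0 < m) (F : Type*) [Field F] [Fintype F]
    (hF : Fintype.card F = p ^ m) (ω : Fˣ) (hω : ∀ x : Fˣ, x ∈ Subgroup.zpowers ω)
    (d e s : ℕ) (hd2 : 2 ≤ d) (hddvd : d ∣ p ^ m - 1)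
    (A : Subgroup (Equiv.Perm F))
    (hA : A = Subgroup.closure {g : Equiv.Perm F |
        (∀ x : F, g x = (ω : F) ^ e * x ^ p ^ s) ∨ (∀ x : F, g x = (ω : F) ^ d * x)}) :
    (∀ x y : F, x ≠ 0 → y ≠ 0 → ∃ g ∈ A, g x = y) ↔
      (0 < e ∧ Nat.gcd d e = 1 ∧ (∀ q : ℕ, q.Prime → q ∣ d → q ∣ p ^ s - 1) ∧
        (4 ∣ d → 4 ∣ p ^ s - 1)) := by
  subst hA
  have := Fact.mk hp
  have : CharP F p := charP_of_card_eq_prime_pow hF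
  have : NeZero d := ⟨by omega⟩
  have hdω : d ∣ orderOf ω := by
    rwa [orderOf_eq_card_of_forall_mem_zpowers hω, Nat.card_units, Nat.card_eq_fintype_card, hF]
  have hpd : (p ^ s).Coprime d := by
    have : p.Coprime (p ^ m - 1) := (Nat.coprime_pow_left_iff hm _ _).1 <|
      (Nat.coprime_self_sub_right (Nat.one_le_pow _ _ hp.pos)).2 (Nat.coprime_one_right _)
    exact (this.coprime_dvd_right hddvd).pow_left s
  have hsub (r : ℕ) : r ∣ p ^ s - 1 ↔ (r : ℤ) ∣ (p ^ s : ℕ) - 1 := by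
    rw [← Int.natCast_dvd_natCast, Nat.cast_sub (Nat.one_le_pow _ _ hp.pos), Nat.cast_one]
  have he : d.Coprime e → 0 < e := fun h => Nat.pos_of_ne_zero <| by
    rintro rfl
    rw [Nat.Coprime, Nat.gcd_zero_right] at h
    omega
  refine (transitive_iff_surjective_lcg (bijective_iterateFrobenius F p s) hω hdω).trans ?_
  rw [surjective_lcg_iff hpd]
  simp only [hsub]
  exact ⟨fun h => ⟨he h.1, h⟩, fun h => h.2⟩

/-- Characterization of transitivity (on nonzero field elements) of the subgroup of
`ΓL₁(p^m)` with standard parameters `(d, e, s)`, where `d ≥ 2`: the subgroup generated by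
`x ↦ ω^e · x^{p^s}` and `x ↦ ω^d · x` is transitive on `F \ {0}` if and only if `e > 0`,
`gcd(d, e) = 1`, every prime divisor of `d` divides `p^s - 1`, and `4 ∣ d → 4 ∣ p^s - 1`. -/
theorem gammaL_one_subgroup_transitive_iff
    (p m : ℕ) (hp : p.Prime) (hm : 0 < m) (F : Type*) [Field F] [Fintype F]
    (hF : Fintype.card F = p ^ m) (ω : Fˣ) (hω : ∀ x : Fˣ, x ∈ Subgroup.zpowers ω)
    (d e s : ℕ) (hd2 : 2 ≤ d) (hddvd : d ∣ p ^ m - 1) (hs1 : 1 ≤ s) (hsm : s ∣ m)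
    (he : e ≤ d - 1) (hde : d ∣ e * ((p ^ m - 1) / (p ^ s - 1)))
    (A : Subgroup (Equiv.Perm F))
    (hA : A = Subgroup.closure {g : Equiv.Perm F |
        (∀ x : F, g x = (ω : F) ^ e * x ^ p ^ s) ∨ (∀ x : F, g x = (ω : F) ^ d * x)}) :
    (∀ x y : F, x ≠ 0 → y ≠ 0 → ∃ g ∈ A, g x = y) ↔
      (0 < e ∧ Nat.gcd d e = 1 ∧ (∀ q : ℕ, q.Prime → q ∣ d → q ∣ p ^ s - 1) ∧
        (4 ∣ d → 4 ∣ p ^ s - 1)) :=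
  gammaL_one_subgroup_transitive_iff_general p m hp hm F hF ω hω d e s hd2 hddvd A hA
end

section
/- Let p be a prime, m a positive integer, F a finite field with p^m elements, and ω a generator of F^×. Let (d, e, s) and (d₁, e₁, s₁) be triples of integers each satisfying: d ≥ 1, d ∣ p^m − 1, s ≥ 1, s ∣ m, 0 ≤ e ≤ d − 1, and d ∣ e·(p^m−1)/(p^s−1) (and the analogous conditions for (d₁, e₁, s₁)). Let A be the subgroup of the permutation group of F generated by x ↦ ω^e·x^{p^s} and x ↦ ω^d·x, and let K be the subgroup generated by x ↦ ω^{e₁}·x^{p^{s₁}} and x ↦ ω^{d₁}·x, and suppose that K ≤ A. Then K is a normal subgroup of A if and only if d₁ divides d·(p^{s₁} − 1) and d₁ divides the integer e₁·(p^s − 1) − e·(p^{s₁} − 1). -/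
/-!
Write `π(a, k)` for `x ↦ ω^a x^(p^k)`. These maps compose as `π(a,k) π(b,l) = π(a + b p^k, k + l)`,
so `π(a,k) π(b,l) π(a,k)⁻¹ = π(a + b p^k - a p^l, l)`. As the ambient group is finite, `K` is the
monoid generated by `σ₁ = π(e₁, s₁)` and `τ₁ = π(d₁, 0)`, and induction on words shows that
`π(a, s₁ c) ∈ K` exactly when `d₁ (p^s₁ - 1) ∣ a (p^s₁ - 1) - e₁ (p^(s₁ c) - 1)`. This condition
does not depend on the representative `(a, c)`: `a` is determined modulo `p^m - 1 = orderOf ω`,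
which `d₁` divides, and `p^(s₁ c)` modulo `p^m - 1`, and `d₁ (p^s₁ - 1) ∣ e₁ (p^m - 1)`.
So `K` is normal in `A = ⟨σ, τ⟩`, `σ = π(e, s)`, `τ = π(d, 0)`, iff the conjugates of `σ₁` and `τ₁`
by `σ` and `τ` lie in `K`: those of `τ₁` always do, those of `σ₁` give the two divisibilities.
-/

theorem forall_conj_mem_closure_iff {G : Type*} [Group G] [Finite G] {S T : Set G} :
    (∀ g ∈ Subgroup.closure S, ∀ k ∈ Subgroup.closure T, g * k * g⁻¹ ∈ Subgroup.closure T) ↔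
      ∀ g ∈ S, ∀ k ∈ T, g * k * g⁻¹ ∈ Subgroup.closure T := by
  refine ⟨fun h g hg k hk ↦ h g (Subgroup.subset_closure hg) k (Subgroup.subset_closure hk),
    fun h g hg ↦ ?_⟩
  have hS (g : G) (hg : g ∈ S) : ∀ k ∈ Subgroup.closure T, g * k * g⁻¹ ∈ Subgroup.closure T :=
    Subgroup.closure_le (K := (Subgroup.closure T).comap (MulAut.conj g).toMonoidHom) |>.mpr
      (h g hg)
  rw [← Subgroup.mem_toSubmonoid, Subgroup.closure_toSubmonoid_of_finite] at hg
  induction hg using Submonoid.closure_induction with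
  | mem g hg => exact hS g hg
  | one => simp
  | mul g₁ g₂ _ _ h₁ h₂ =>
    intro k hk
    simpa only [mul_inv_rev, mul_assoc] using h₁ _ (h₂ k hk)

section
variable {F : Type*} [Field F] [Fintype F] (p : ℕ) [Fact p.Prime] [CharP F p] (ω : Fˣ)

noncomputable def gammaLPerm (a : ℤ) (k : ℕ) : Equiv.Perm F :=
  (iterateFrobeniusEquiv F p k).toEquiv.trans (Units.mulLeft (ω ^ a))

@[simp]
theorem gammaLPerm_apply (a : ℤ) (k : ℕ) (x : F) :
    gammaLPerm p ω a k x = ((ω ^ a : Fˣ) : F) * x ^ p ^ k := rfl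

theorem gammaLPerm_mul (a b : ℤ) (k l : ℕ) :
    gammaLPerm p ω a k * gammaLPerm p ω b l = gammaLPerm p ω (a + b * p ^ k) (k + l) := by
  ext x
  simp only [Equiv.Perm.mul_apply, gammaLPerm_apply, mul_pow, ← pow_mul, ← pow_add,
    ← Units.val_pow_eq_pow_val, zpow_add, Units.val_mul, mul_assoc, zpow_mul, add_comm l k]
  rw [← zpow_natCast, Nat.cast_pow]

theorem gammaLPerm_zero_zero : gammaLPerm p ω 0 0 = 1 := by
  ext x
  simp

theorem gammaLPerm_conj (a b : ℤ) (k l : ℕ) :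
    gammaLPerm p ω a k * gammaLPerm p ω b l * (gammaLPerm p ω a k)⁻¹ =
      gammaLPerm p ω (a + b * p ^ k - a * p ^ l) l := by
  rw [mul_inv_eq_iff_eq_mul, gammaLPerm_mul, gammaLPerm_mul, add_comm l k]
  congr 1
  ring

theorem gammaLPerm_zpow (b t : ℤ) : gammaLPerm p ω b 0 ^ t = gammaLPerm p ω (b * t) 0 := by
  have hinv : (gammaLPerm p ω b 0)⁻¹ = gammaLPerm p ω (-b) 0 :=
    inv_eq_of_mul_eq_one_right <| by simp [gammaLPerm_mul, gammaLPerm_zero_zero]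
  induction t using Int.induction_on with
  | zero => simp [gammaLPerm_zero_zero]
  | succ t ih => rw [zpow_add_one, ih, gammaLPerm_mul]; congr 1; ring
  | pred t ih => rw [zpow_sub_one, ih, hinv, gammaLPerm_mul]; congr 1; ring

theorem orderOf_dvd_sub_of_gammaLPerm_eq {a a' : ℤ} {k k' : ℕ}
    (h : gammaLPerm p ω a k = gammaLPerm p ω a' k') :
    (orderOf ω : ℤ) ∣ a - a' ∧ (orderOf ω : ℤ) ∣ (p : ℤ) ^ k - (p : ℤ) ^ k' := by
  have h₁ : ω ^ a = ω ^ a' := Units.ext <| by simpa using congr($h 1)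
  have h₂ : ω ^ p ^ k = ω ^ p ^ k' := Units.ext <| by
    have := congr($h ω)
    rw [gammaLPerm_apply, gammaLPerm_apply, h₁] at this
    simpa using mul_left_cancel₀ (Units.ne_zero _) this
  refine ⟨(zpow_eq_zpow_iff_modEq.mp h₁).symm.dvd, ?_⟩
  simpa using ((pow_eq_pow_iff_modEq.mp h₂).symm.dvd)

theorem prime_pow_sub_one_ne_zero {s : ℕ} (hs : s ≠ 0) : (p : ℤ) ^ s - 1 ≠ 0 :=
  sub_ne_zero.mpr (one_lt_pow₀ (mod_cast (Fact.out : p.Prime).one_lt) hs).ne'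

variable {p ω} {d e : ℤ} {s : ℕ}

theorem gammaLPerm_mem_closure_of_dvd (hs : s ≠ 0) (c : ℕ) {a : ℤ}
    (h : d * ((p : ℤ) ^ s - 1) ∣ a * ((p : ℤ) ^ s - 1) - e * ((p : ℤ) ^ (s * c) - 1)) :
    gammaLPerm p ω a (s * c) ∈ Subgroup.closure {gammaLPerm p ω e s, gammaLPerm p ω d 0} := by
  induction c generalizing a with
  | zero =>
    obtain ⟨t, rfl⟩ : d ∣ a := by
      simpa [mul_dvd_mul_iff_right (prime_pow_sub_one_ne_zero p hs)] using h
    rw [mul_zero, ← gammaLPerm_zpow]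
    exact zpow_mem (Subgroup.subset_closure (by simp)) t
  | succ c ih =>
    have hc : gammaLPerm p ω a (s * (c + 1)) =
        gammaLPerm p ω (a - e * p ^ (s * c)) (s * c) * gammaLPerm p ω e s := by
      rw [gammaLPerm_mul, sub_add_cancel, mul_add_one]
    rw [hc]
    refine mul_mem (ih ?_) (Subgroup.subset_closure (by simp))
    convert h using 1
    ring

theorem exists_gammaLPerm_of_mem_closure {g : Equiv.Perm F}
    (hg : g ∈ Subgroup.closure {gammaLPerm p ω e s, gammaLPerm p ω d 0}) :
    ∃ (a : ℤ) (c : ℕ), g = gammaLPerm p ω a (s * c) ∧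
      d * ((p : ℤ) ^ s - 1) ∣ a * ((p : ℤ) ^ s - 1) - e * ((p : ℤ) ^ (s * c) - 1) := by
  rw [← Subgroup.mem_toSubmonoid, Subgroup.closure_toSubmonoid_of_finite] at hg
  induction hg using Submonoid.closure_induction with
  | mem g hg =>
    rcases hg with rfl | rfl
    · exact ⟨e, 1, by rw [mul_one], by simp⟩
    · exact ⟨d, 0, rfl, by simp⟩
  | one => exact ⟨0, 0, (gammaLPerm_zero_zero p ω).symm, by simp⟩
  | mul g g' _ _ hg hg' =>
    obtain ⟨a, c, rfl, hac⟩ := hg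
    obtain ⟨a', c', rfl, hac'⟩ := hg'
    refine ⟨a + a' * p ^ (s * c), c + c', by rw [gammaLPerm_mul, mul_add], ?_⟩
    have key : (a + a' * p ^ (s * c)) * ((p : ℤ) ^ s - 1) - e * ((p : ℤ) ^ (s * (c + c')) - 1) =
        (a * ((p : ℤ) ^ s - 1) - e * ((p : ℤ) ^ (s * c) - 1)) +
          p ^ (s * c) * (a' * ((p : ℤ) ^ s - 1) - e * ((p : ℤ) ^ (s * c') - 1)) := by
      rw [mul_add, pow_add]
      ring
    rw [key]
    exact dvd_add hac (hac'.mul_left _)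

theorem gammaLPerm_mem_closure_iff (hs : s ≠ 0) (hd : d ∣ orderOf ω)
    (he : d * ((p : ℤ) ^ s - 1) ∣ e * orderOf ω) {a : ℤ} {k : ℕ} (hk : s ∣ k) :
    gammaLPerm p ω a k ∈ Subgroup.closure {gammaLPerm p ω e s, gammaLPerm p ω d 0} ↔
      d * ((p : ℤ) ^ s - 1) ∣ a * ((p : ℤ) ^ s - 1) - e * ((p : ℤ) ^ k - 1) := by
  obtain ⟨c, rfl⟩ := hk
  refine ⟨fun h ↦ ?_, gammaLPerm_mem_closure_of_dvd hs c⟩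
  obtain ⟨a', c', heq, hdvd⟩ := exists_gammaLPerm_of_mem_closure h
  obtain ⟨ha, hk⟩ := orderOf_dvd_sub_of_gammaLPerm_eq p ω heq
  have key : a * ((p : ℤ) ^ s - 1) - e * ((p : ℤ) ^ (s * c) - 1) =
      (a' * ((p : ℤ) ^ s - 1) - e * ((p : ℤ) ^ (s * c') - 1)) + (a - a') * ((p : ℤ) ^ s - 1) -
        e * ((p : ℤ) ^ (s * c) - (p : ℤ) ^ (s * c')) := by ring
  rw [key]
  exact dvd_sub (dvd_add hdvd (mul_dvd_mul_right (hd.trans ha) _))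
    (he.trans (mul_dvd_mul_left _ hk))

theorem forall_conj_mem_closure_gammaLPerm_iff {d₁ e₁ : ℤ} {s₁ : ℕ} (hs₁ : s₁ ≠ 0)
    (hd₁ : d₁ ∣ orderOf ω) (he₁ : d₁ * ((p : ℤ) ^ s₁ - 1) ∣ e₁ * orderOf ω) :
    (∀ g ∈ Subgroup.closure {gammaLPerm p ω e s, gammaLPerm p ω d 0},
      ∀ k ∈ Subgroup.closure {gammaLPerm p ω e₁ s₁, gammaLPerm p ω d₁ 0},
        g * k * g⁻¹ ∈ Subgroup.closure {gammaLPerm p ω e₁ s₁, gammaLPerm p ω d₁ 0}) ↔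
      d₁ ∣ d * ((p : ℤ) ^ s₁ - 1) ∧ d₁ ∣ e₁ * ((p : ℤ) ^ s - 1) - e * ((p : ℤ) ^ s₁ - 1) := by
  have hP := prime_pow_sub_one_ne_zero p hs₁
  have hmem (a : ℤ) {k : ℕ} (hk : s₁ ∣ k) := gammaLPerm_mem_closure_iff (a := a) hs₁ hd₁ he₁ hk
  rw [forall_conj_mem_closure_iff]
  simp only [Set.mem_insert_iff, Set.mem_singleton_iff, forall_eq_or_imp, forall_eq,
    gammaLPerm_conj, hmem _ dvd_rfl, hmem _ (dvd_zero _)]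
  have hσσ₁ : (e + e₁ * p ^ s - e * p ^ s₁) * (p ^ s₁ - 1) - e₁ * (p ^ s₁ - 1) =
      (e₁ * (p ^ s - 1) - e * (p ^ s₁ - 1)) * ((p : ℤ) ^ s₁ - 1) := by ring
  have hστ₁ : (e + d₁ * p ^ s - e * p ^ 0) * (p ^ s₁ - 1) - e₁ * ((p : ℤ) ^ 0 - 1) =
      d₁ * (p ^ s₁ - 1) * (p : ℤ) ^ s := by ring
  have hτσ₁ : (d + e₁ * p ^ 0 - d * p ^ s₁) * (p ^ s₁ - 1) - e₁ * (p ^ s₁ - 1) =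
      -(d * (p ^ s₁ - 1)) * ((p : ℤ) ^ s₁ - 1) := by ring
  have hττ₁ : (d + d₁ * p ^ 0 - d * p ^ 0) * (p ^ s₁ - 1) - e₁ * ((p : ℤ) ^ 0 - 1) =
      d₁ * ((p : ℤ) ^ s₁ - 1) := by ring
  rw [hσσ₁, hστ₁, hτσ₁, hττ₁, mul_dvd_mul_iff_right hP, mul_dvd_mul_iff_right hP, dvd_neg]
  simp only [dvd_mul_right, dvd_rfl, and_true]
  exact and_comm

variable (p ω) in
theorem setOf_eq_gammaLPerm_pair (d e s : ℕ) :
    {g : Equiv.Perm F | (∀ x, g x = (ω : F) ^ e * x ^ p ^ s) ∨ (∀ x, g x = (ω : F) ^ d * x)} =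
      {gammaLPerm p ω e s, gammaLPerm p ω d 0} := by
  ext g
  simp [Equiv.ext_iff]

end

theorem mul_pow_sub_one_dvd_of_dvd_div {p m s d e : ℕ} (hsm : s ∣ m)
    (h : d ∣ e * ((p ^ m - 1) / (p ^ s - 1))) : d * (p ^ s - 1) ∣ e * (p ^ m - 1) := by
  rw [← Nat.div_mul_cancel (Nat.pow_sub_one_dvd_pow_sub_one p hsm), ← mul_assoc]
  exact mul_dvd_mul_right h _

theorem gammaL_one_normality_criterion_general
    (p m : ℕ) (hp : p.Prime) (F : Type*) [Field F] [Fintype F]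
    (hF : Fintype.card F = p ^ m) (ω : Fˣ) (hω : ∀ x : Fˣ, x ∈ Subgroup.zpowers ω)
    (d e s d₁ e₁ s₁ : ℕ)
    (hddvd₁ : d₁ ∣ p ^ m - 1) (hs₁ : 1 ≤ s₁) (hsm₁ : s₁ ∣ m)
    (hde₁ : d₁ ∣ e₁ * ((p ^ m - 1) / (p ^ s₁ - 1)))
    (A K : Subgroup (Equiv.Perm F))
    (hA : A = Subgroup.closure {g : Equiv.Perm F |
        (∀ x : F, g x = (ω : F) ^ e * x ^ p ^ s) ∨ (∀ x : F, g x = (ω : F) ^ d * x)})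
    (hK : K = Subgroup.closure {g : Equiv.Perm F |
        (∀ x : F, g x = (ω : F) ^ e₁ * x ^ p ^ s₁) ∨ (∀ x : F, g x = (ω : F) ^ d₁ * x)}) :
    (∀ g ∈ A, ∀ k ∈ K, g * k * g⁻¹ ∈ K) ↔
      (d₁ ∣ d * (p ^ s₁ - 1) ∧
        (d₁ : ℤ) ∣ (e₁ : ℤ) * ((p : ℤ) ^ s - 1) - (e : ℤ) * ((p : ℤ) ^ s₁ - 1)) := by
  classical
  have := Fact.mk hp
  have := charP_of_card_eq_prime_pow hF
  have hcast (k : ℕ) : ((p ^ k - 1 : ℕ) : ℤ) = (p : ℤ) ^ k - 1 := by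
    rw [Nat.cast_sub (Nat.one_le_pow _ _ hp.pos), Nat.cast_pow, Nat.cast_one]
  have hord : (orderOf ω : ℤ) = (p : ℤ) ^ m - 1 := by
    rw [orderOf_eq_card_of_forall_mem_zpowers hω, Nat.card_eq_fintype_card, Fintype.card_units,
      hF, hcast]
  have hd₁ : (d₁ : ℤ) ∣ orderOf ω := by
    rw [hord, ← hcast]
    exact mod_cast hddvd₁
  have he₁ : (d₁ : ℤ) * ((p : ℤ) ^ s₁ - 1) ∣ e₁ * orderOf ω := by
    rw [hord, ← hcast, ← hcast]
    exact mod_cast mul_pow_sub_one_dvd_of_dvd_div hsm₁ hde₁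
  subst hA hK
  rw [setOf_eq_gammaLPerm_pair, setOf_eq_gammaLPerm_pair,
    forall_conj_mem_closure_gammaLPerm_iff (by omega) hd₁ he₁, ← hcast s₁, ← Nat.cast_mul,
    Int.natCast_dvd_natCast]

/-- Criterion for normality in `A` of a subgroup `K` of `ΓL₁(p^m)`, where `A` and `K` are
given in standard form with standard parameters `(d, e, s)` and `(d₁, e₁, s₁)` respectively
and `K ≤ A`: `K` is normal in `A` if and only if `d₁ ∣ d·(p^{s₁} - 1)` and `d₁` divides the
integer `e₁·(p^s - 1) - e·(p^{s₁} - 1)`. -/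
theorem gammaL_one_normality_criterion
    (p m : ℕ) (hp : p.Prime) (hm : 0 < m) (F : Type*) [Field F] [Fintype F]
    (hF : Fintype.card F = p ^ m) (ω : Fˣ) (hω : ∀ x : Fˣ, x ∈ Subgroup.zpowers ω)
    (d e s d₁ e₁ s₁ : ℕ)
    (hd : 1 ≤ d) (hddvd : d ∣ p ^ m - 1) (hs : 1 ≤ s) (hsm : s ∣ m)
    (he : e ≤ d - 1) (hde : d ∣ e * ((p ^ m - 1) / (p ^ s - 1)))
    (hd₁ : 1 ≤ d₁) (hddvd₁ : d₁ ∣ p ^ m - 1) (hs₁ : 1 ≤ s₁) (hsm₁ : s₁ ∣ m)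
    (he₁ : e₁ ≤ d₁ - 1) (hde₁ : d₁ ∣ e₁ * ((p ^ m - 1) / (p ^ s₁ - 1)))
    (A K : Subgroup (Equiv.Perm F))
    (hA : A = Subgroup.closure {g : Equiv.Perm F |
        (∀ x : F, g x = (ω : F) ^ e * x ^ p ^ s) ∨ (∀ x : F, g x = (ω : F) ^ d * x)})
    (hK : K = Subgroup.closure {g : Equiv.Perm F |
        (∀ x : F, g x = (ω : F) ^ e₁ * x ^ p ^ s₁) ∨ (∀ x : F, g x = (ω : F) ^ d₁ * x)})
    (hKA : K ≤ A) :
    (∀ g ∈ A, ∀ k ∈ K, g * k * g⁻¹ ∈ K) ↔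
      (d₁ ∣ d * (p ^ s₁ - 1) ∧
        (d₁ : ℤ) ∣ (e₁ : ℤ) * ((p : ℤ) ^ s - 1) - (e : ℤ) * ((p : ℤ) ^ s₁ - 1)) :=
  gammaL_one_normality_criterion_general p m hp F hF ω hω d e s d₁ e₁ s₁ hddvd₁ hs₁ hsm₁ hde₁ A K hA
    hK
end

section
/- Let p be a prime, m a positive integer, and F a finite field with p^m elements. Let L be a subgroup of the multiplicative group F^× whose index in F^× divides m, let i be a natural number, and let ψ be a field automorphism of F such that ψ(x) = x^{p^i} for all x ∈ L. Then ψ(x) = x^{p^i} for all x ∈ F, i.e., ψ is the i-th power of the Frobenius automorphism x ↦ x^p. -/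
private lemma aux_le_two_pow : ∀ m : ℕ, m ≤ 2 ^ ((m + 1) / 2) := by
  intro m
  induction m using Nat.strong_induction_on with
  | _ m ih =>
    match m with
    | 0 => decide
    | 1 => decide
    | 2 => decide
    | 3 => decide
    | (k+4) =>
      have h := ih (k+2) (by omega)
      have h2 : (k + 4 + 1) / 2 = (k + 2 + 1) / 2 + 1 := by omega
      rw [h2, pow_succ]
      omega

/-- If a field automorphism `ψ` of the finite field `F` with `p^m` elements acts as
`x ↦ x^{p^i}` on a subgroup `L` of `F^×` whose index divides `m` (a "large" subgroup), then
`ψ` is the `i`-th power of the Frobenius, i.e. `ψ x = x^{p^i}` for all `x ∈ F`. -/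
theorem field_aut_eq_frobenius_pow_of_agree_on_large_subgroup
    (p m : ℕ) (hp : p.Prime) (hm : 0 < m) (F : Type*) [Field F] [Fintype F]
    (hF : Fintype.card F = p ^ m)
    (L : Subgroup Fˣ) (hL : L.index ∣ m)
    (i : ℕ) (ψ : F ≃+* F) (hψ : ∀ x : Fˣ, x ∈ L → ψ (x : F) = (x : F) ^ p ^ i) :
    ∀ x : F, ψ x = x ^ p ^ i := by
  classical
  -- the characteristic of F is p
  haveI hq : CharP F (ringChar F) := ringChar.charP F
  obtain ⟨n, hqp, hcard⟩ := FiniteField.card F (ringChar F)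
  have hpq : ringChar F = p := by
    have h1 : ringChar F ∣ p ^ m := by
      rw [← hF, hcard]
      exact dvd_pow_self _ n.ne_zero
    exact ((Nat.prime_dvd_prime_iff_eq hqp hp).mp (hqp.dvd_of_dvd_pow h1))
  haveI hcharF : CharP F p := hpq ▸ hq
  haveI : Fact p.Prime := ⟨hp⟩
  haveI : ExpChar F p := ExpChar.prime hp
  -- the subfield on which ψ agrees with the i-th Frobenius power
  set φ : F →+* F := iterateFrobenius F p i with hφ
  have hφdef : ∀ x : F, φ x = x ^ p ^ i := fun x => iterateFrobenius_def p i x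
  let K : Subfield F :=
    { carrier := {x | ψ x = x ^ p ^ i}
      mul_mem' := by
        intro a b ha hb
        simp only [Set.mem_setOf_eq] at *
        rw [map_mul, ha, hb, mul_pow]
      one_mem' := by simp
      add_mem' := by
        intro a b ha hb
        simp only [Set.mem_setOf_eq] at *
        rw [map_add, ha, hb, ← hφdef, ← hφdef, ← hφdef, map_add]
      zero_mem' := by
        simp only [Set.mem_setOf_eq, map_zero]
        rw [zero_pow (pow_ne_zero i hp.ne_zero)]
      neg_mem' := by
        intro a ha
        simp only [Set.mem_setOf_eq] at *
        rw [map_neg, ha, ← hφdef, ← hφdef, map_neg]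
      inv_mem' := by
        intro a ha
        simp only [Set.mem_setOf_eq] at *
        rw [map_inv₀, ha, inv_pow] }
  have hKmem : ∀ x : F, x ∈ K ↔ ψ x = x ^ p ^ i := fun x => Iff.rfl
  intro x
  by_contra hx
  have hxK : x ∉ K := hx
  -- K is a finite field of characteristic p
  haveI : Fintype K := Fintype.ofFinite K
  haveI hKchar : CharP K p := K.subtype.charP (Subtype.val_injective) p
  obtain ⟨s, -, hKcard⟩ := FiniteField.card K p
  -- F is a K-vector space, so p^m = (p^s)^r
  have hcards : Fintype.card F = Fintype.card K ^ Module.finrank K F := Module.card_eq_pow_finrank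
  set r := Module.finrank K F with hr
  have hmsr : m = s * r := by
    have : p ^ m = p ^ ((s : ℕ) * r) := by
      rw [← hF, hcards, hKcard, ← pow_mul]
    exact Nat.pow_right_injective hp.two_le this
  -- K ≠ F, so r ≥ 2
  have hKlt : Fintype.card K < Fintype.card F := by
    apply Fintype.card_lt_of_injective_of_notMem (fun y : K => (y : F))
      Subtype.val_injective (b := x)
    rintro ⟨y, hy⟩
    exact hxK (hy ▸ y.2)
  have hr2 : 2 ≤ r := by
    by_contra hr2
    interval_cases r
    · rw [hcards, pow_zero] at hKlt
      have : (0 : ℕ) < Fintype.card K := Fintype.card_pos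
      omega
    · rw [hcards, pow_one] at hKlt
      omega
  have hs1 : 1 ≤ (s : ℕ) := s.one_le
  -- the cardinality of L divides p^s - 1
  haveI : IsCyclic L := inferInstance
  obtain ⟨g, hg⟩ := IsCyclic.exists_generator (α := L)
  have hord : orderOf g = Nat.card L := orderOf_eq_card_of_forall_mem_zpowers hg
  have hordF : orderOf ((g : Fˣ)) = Nat.card L := by
    rw [← hord]
    exact orderOf_injective L.subtype L.subtype_injective g
  have hgK : ((g : Fˣ) : F) ∈ K := hψ _ g.2
  have hgne : (⟨((g : Fˣ) : F), hgK⟩ : K) ≠ 0 := by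
    intro h
    exact Units.ne_zero (g : Fˣ) (congrArg Subtype.val h)
  have hpow : (⟨((g : Fˣ) : F), hgK⟩ : K) ^ (Fintype.card K - 1) = 1 :=
    FiniteField.pow_card_sub_one_eq_one _ hgne
  have hpowF : ((g : Fˣ) : F) ^ (p ^ (s : ℕ) - 1) = 1 := by
    have := congrArg (Subtype.val) hpow
    push_cast at this
    rwa [← hKcard]
  have hpowU : (g : Fˣ) ^ (p ^ (s : ℕ) - 1) = 1 := by
    ext
    rw [Units.val_pow_eq_pow_val, Units.val_one]
    exact hpowF
  have hNdvd : Nat.card L ∣ p ^ (s : ℕ) - 1 := by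
    rw [← hordF]
    exact orderOf_dvd_of_pow_eq_one hpowU
  -- counting
  have hNd : Nat.card L * L.index = p ^ m - 1 := by
    rw [Subgroup.card_mul_index, Nat.card_eq_fintype_card, Fintype.card_units, hF]
  have hdm : L.index ≤ m := Nat.le_of_dvd hm hL
  have hNle : Nat.card L ≤ p ^ (s : ℕ) - 1 := Nat.le_of_dvd (by
    have : 2 ≤ p ^ (s : ℕ) := le_trans hp.two_le (Nat.le_self_pow (by omega) p)
    omega) hNdvd
  -- m ≤ p ^ (m - s)
  have hsle : 2 * (s : ℕ) ≤ m := by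
    calc 2 * (s : ℕ) = (s : ℕ) * 2 := by ring
    _ ≤ (s : ℕ) * r := Nat.mul_le_mul_left _ hr2
    _ = m := hmsr.symm
  have hmle : m ≤ p ^ (m - (s : ℕ)) := by
    calc m ≤ 2 ^ ((m + 1) / 2) := aux_le_two_pow m
    _ ≤ 2 ^ (m - (s : ℕ)) := Nat.pow_le_pow_right (by omega) (by omega)
    _ ≤ p ^ (m - (s : ℕ)) := Nat.pow_le_pow_left hp.two_le _
  -- the contradiction
  have hps : 2 ≤ p ^ (s : ℕ) := le_trans hp.two_le (Nat.le_self_pow (by omega) p)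
  have hsplit : p ^ m = p ^ (s : ℕ) * p ^ (m - (s : ℕ)) := by
    rw [← pow_add]
    congr 1
    omega
  have hpms : 2 ≤ p ^ (m - (s : ℕ)) := le_trans hp.two_le (Nat.le_self_pow (by omega) p)
  have : p ^ m - 1 ≤ (p ^ (s : ℕ) - 1) * p ^ (m - (s : ℕ)) := by
    calc p ^ m - 1 = Nat.card L * L.index := hNd.symm
    _ ≤ (p ^ (s : ℕ) - 1) * m := Nat.mul_le_mul hNle hdm
    _ ≤ (p ^ (s : ℕ) - 1) * p ^ (m - (s : ℕ)) := Nat.mul_le_mul_left _ hmle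
  have hlt : (p ^ (s : ℕ) - 1) * p ^ (m - (s : ℕ)) < p ^ m - 1 := by
    have := Nat.sub_mul (p ^ (s : ℕ)) 1 (p ^ (m - (s : ℕ)))
    rw [this, one_mul, ← hsplit]
    have h2 : 2 ≤ p ^ m := by rw [hsplit]; nlinarith
    omega
  omega
end

section
/- Let n, m, u be positive integers. The following are equivalent: (1) n divides m, u ≤ 2^n − 1, u is odd and coprime to 2^n − 1, and the number u·(2^m−1)/(2^n−1) has exactly two nonzero binary digits; (2) either (a) m = n ≥ 2 and u = 1 + 2^k for some k ∈ {1,…,m−1} with gcd(m, 2k) dividing k (equivalently, the 2-adic valuation of k is at least that of m), or (b) m is even, n = m/2, and u = 1. -/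
/-!
Write `m = n * q`. Then `(2^m - 1) / (2^n - 1) = ∑_{j < q} 2^(n j)`, and since `u < 2^n` the
shifted copies `2^(n j) * u` occupy disjoint blocks of binary digits, so the digit sum of the
product is `q` times that of `u`. Hence `q * s(u) = 2`: either `q = 1` and the odd number `u` is
`1 + 2^k`, or `q = 2` and `u = 1`. Finally `gcd(2^a - 1, 2^b - 1) = 2^gcd(a, b) - 1` turns
coprimality of `2^k + 1` (a divisor of `2^(2k) - 1`) and `2^m - 1` into `gcd(m, 2k) ∣ k`.
-/

open Finset

namespace Nat

section DigitSum

variable {b : ℕ}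

theorem eq_zero_of_digits_sum_eq_zero {u : ℕ} (h : (b.digits u).sum = 0) : u = 0 := by
  by_contra hu
  exact getLast_digit_ne_zero b hu
    (List.sum_eq_zero_iff.1 h _ (List.getLast_mem (digits_ne_nil_iff_ne_zero.2 hu)))

theorem exists_eq_pow_of_digits_sum_eq_one (hb : 1 < b) {u : ℕ} (h : (b.digits u).sum = 1) :
    ∃ t, u = b ^ t := by
  induction u using Nat.strong_induction_on with
  | _ u ih =>
    have hu : u ≠ 0 := by rintro rfl; simp at h
    have hdiv := Nat.div_add_mod u b
    rw [digits_def' hb (pos_of_ne_zero hu), List.sum_cons] at h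
    obtain ⟨hmod, hsum⟩ | ⟨hmod, hsum⟩ :
        u % b = 0 ∧ (b.digits (u / b)).sum = 1 ∨ u % b = 1 ∧ (b.digits (u / b)).sum = 0 := by
      omega
    · obtain ⟨t, ht⟩ := ih (u / b) (div_lt_self (pos_of_ne_zero hu) hb) hsum
      exact ⟨t + 1, by rw [pow_succ', ← ht]; omega⟩
    · have := eq_zero_of_digits_sum_eq_zero hsum
      exact ⟨0, by simp_all⟩

theorem digits_sum_add_base_pow_mul (hb : 1 < b) {n u : ℕ} (hu : u < b ^ n) (v : ℕ) :
    (b.digits (u + b ^ n * v)).sum = (b.digits u).sum + (b.digits v).sum := by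
  rcases Nat.eq_zero_or_pos v with rfl | hv
  · simp
  have hlen : (b.digits u).length ≤ n := (digits_length_le_iff hb u).2 hu
  have := digits_append_zeroes_append_digits (k := n - (b.digits u).length) (n := u) hb hv
  rw [Nat.add_sub_cancel' hlen] at this
  simp [← this]

theorem digits_sum_one_add_base_pow (hb : 1 < b) {k : ℕ} (hk : k ≠ 0) :
    (b.digits (1 + b ^ k)).sum = 2 := by
  have := digits_sum_add_base_pow_mul hb (one_lt_pow hk hb) 1
  rw [mul_one] at this
  simp [this, digits_of_lt b 1 one_ne_zero hb]

theorem digits_sum_mul_geom_sum (hb : 1 < b) {n u : ℕ} (hu : u < b ^ n) (q : ℕ) :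
    (b.digits (u * ∑ j ∈ range q, (b ^ n) ^ j)).sum = q * (b.digits u).sum := by
  induction q with
  | zero => simp
  | succ q ih =>
    have hsplit : u * ∑ j ∈ range (q + 1), (b ^ n) ^ j
        = u + b ^ n * (u * ∑ j ∈ range q, (b ^ n) ^ j) := by
      rw [geom_sum_succ]; ring
    rw [hsplit, digits_sum_add_base_pow_mul hb hu, ih]
    ring

theorem pow_mul_sub_one_div_pow_sub_one (hb : 1 < b) {n : ℕ} (hn : n ≠ 0) (q : ℕ) :
    (b ^ (n * q) - 1) / (b ^ n - 1) = ∑ j ∈ range q, (b ^ n) ^ j := by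
  rw [geomSum_eq (one_lt_pow hn hb) q, pow_mul]

theorem digits_sum_mul_pow_mul_sub_one_div (hb : 1 < b) {n u : ℕ} (hn : n ≠ 0)
    (hu : u < b ^ n) (q : ℕ) :
    (b.digits (u * ((b ^ (n * q) - 1) / (b ^ n - 1)))).sum = q * (b.digits u).sum := by
  rw [pow_mul_sub_one_div_pow_sub_one hb hn, digits_sum_mul_geom_sum hb hu]

end DigitSum

theorem digits_two_sum_of_odd {u : ℕ} (hu : Odd u) :
    (digits 2 u).sum = 1 + (digits 2 (u / 2)).sum := by
  rw [digits_def' one_lt_two hu.pos, List.sum_cons, Nat.odd_iff.1 hu]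

theorem eq_one_of_odd_of_digits_sum_eq_one {u : ℕ} (hu : Odd u) (h : (digits 2 u).sum = 1) :
    u = 1 := by
  rw [digits_two_sum_of_odd hu, add_eq_left] at h
  rw [← two_mul_div_two_add_one_of_odd hu, eq_zero_of_digits_sum_eq_zero h]

theorem exists_eq_one_add_two_pow_of_odd_of_digits_sum_eq_two {u : ℕ} (hu : Odd u)
    (h : (digits 2 u).sum = 2) : ∃ k, 1 ≤ k ∧ u = 1 + 2 ^ k := by
  rw [digits_two_sum_of_odd hu] at h
  obtain ⟨t, ht⟩ := exists_eq_pow_of_digits_sum_eq_one one_lt_two (u := u / 2) (by omega)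
  refine ⟨t + 1, Nat.le_add_left 1 t, ?_⟩
  rw [pow_succ', ← ht, add_comm, two_mul_div_two_add_one_of_odd hu]

theorem pow_sub_one_dvd_pow_sub_one_iff {b : ℕ} (hb : 1 < b) {m n : ℕ} :
    b ^ m - 1 ∣ b ^ n - 1 ↔ m ∣ n := by
  refine ⟨fun h => ?_, pow_sub_one_dvd_pow_sub_one b⟩
  have hgcd := pow_sub_one_gcd_pow_sub_one b m n
  rw [Nat.gcd_eq_left h] at hgcd
  have := Nat.pow_right_injective hb (sub_one_cancel (by positivity) (by positivity) hgcd)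
  exact gcd_eq_left_iff_dvd.1 this.symm

theorem coprime_two_pow_add_one_two_pow_sub_one_iff {k m : ℕ} (hm : m ≠ 0) :
    Coprime (2 ^ k + 1) (2 ^ m - 1) ↔ gcd m (2 * k) ∣ k := by
  have hfactor : (2 ^ k + 1) * (2 ^ k - 1) = 2 ^ (2 * k) - 1 := by
    rw [← sq_sub_sq, one_pow, ← pow_mul, mul_comm]
  have hgcd := pow_sub_one_gcd_pow_sub_one 2 m (2 * k)
  rw [← pow_sub_one_dvd_pow_sub_one_iff one_lt_two]
  constructor
  · intro hcop
    have hdvd : 2 ^ gcd m (2 * k) - 1 ∣ (2 ^ k + 1) * (2 ^ k - 1) :=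
      hfactor ▸ hgcd ▸ gcd_dvd_right _ _
    exact (Coprime.coprime_dvd_left (hgcd ▸ gcd_dvd_left _ _) hcop.symm).dvd_of_dvd_mul_left hdvd
  · intro hd
    set g := gcd (2 ^ k + 1) (2 ^ m - 1)
    have hg : g ∣ 2 ^ k - 1 :=
      (hgcd ▸ dvd_gcd (gcd_dvd_right _ _) (hfactor ▸ (gcd_dvd_left _ _).mul_right _)).trans hd
    have hg2 : g ∣ 2 := by
      have := Nat.dvd_sub (gcd_dvd_left _ _) hg
      rwa [show 2 ^ k + 1 - (2 ^ k - 1) = 2 by have := Nat.one_le_two_pow (n := k); omega] at this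
    have hodd : Odd g :=
      (Nat.Even.sub_odd Nat.one_le_two_pow ((even_pow' hm).2 even_two) odd_one).of_dvd_nat
        (gcd_dvd_right _ _)
    exact (coprime_two_right.2 hodd).eq_one_of_dvd hg2

end Nat

open Nat in
theorem two_binary_digits_characterization_general
    (n m u : ℕ) (hn : 0 < n) :
    (n ∣ m ∧ u ≤ 2 ^ n - 1 ∧ Odd u ∧ Nat.Coprime u (2 ^ n - 1) ∧
        (Nat.digits 2 (u * ((2 ^ m - 1) / (2 ^ n - 1)))).sum = 2) ↔
      ((m = n ∧ 2 ≤ m ∧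
          ∃ k : ℕ, 1 ≤ k ∧ k ≤ m - 1 ∧ u = 1 + 2 ^ k ∧ Nat.gcd m (2 * k) ∣ k) ∨
        (2 ∣ m ∧ n = m / 2 ∧ u = 1)) := by
  constructor
  · rintro ⟨⟨q, rfl⟩, hle, hodd, hcop, hsum⟩
    have hu := hodd.pos
    rw [digits_sum_mul_pow_mul_sub_one_div one_lt_two hn.ne' (by omega)] at hsum
    have hs : (digits 2 u).sum ≠ 0 := fun h => hu.ne' (eq_zero_of_digits_sum_eq_zero h)
    obtain rfl | rfl : q = 1 ∨ q = 2 := (dvd_prime prime_two).1 (Dvd.intro _ hsum)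
    · obtain ⟨k, hk, rfl⟩ :=
        exists_eq_one_add_two_pow_of_odd_of_digits_sum_eq_two hodd (by omega)
      have hkn : k < n := (Nat.pow_lt_pow_iff_right one_lt_two).1 (by omega)
      rw [add_comm, coprime_two_pow_add_one_two_pow_sub_one_iff hn.ne'] at hcop
      rw [mul_one]
      exact Or.inl ⟨rfl, by omega, k, hk, by omega, rfl, hcop⟩
    · exact Or.inr ⟨dvd_mul_left _ _, by omega,
        eq_one_of_odd_of_digits_sum_eq_one hodd (by omega)⟩
  · rintro (⟨rfl, hm2, k, hk, hkm, rfl, hcop⟩ | ⟨⟨n', rfl⟩, hn', rfl⟩)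
    · have hpow : 2 ^ (k + 1) ≤ 2 ^ m := Nat.pow_le_pow_right two_pos (by omega)
      have h2k : 2 ≤ 2 ^ k := Nat.le_self_pow (by omega) 2
      refine ⟨dvd_rfl, by rw [pow_succ] at hpow; omega,
        (even_pow' (by omega)).2 even_two |>.one_add, ?_, ?_⟩
      · rwa [add_comm, coprime_two_pow_add_one_two_pow_sub_one_iff (by omega)]
      · rw [Nat.div_self (by omega), mul_one, digits_sum_one_add_base_pow one_lt_two (by omega)]
    · obtain rfl : n = n' := by omega
      have h2n : 1 < 2 ^ n := Nat.one_lt_two_pow hn.ne'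
      refine ⟨dvd_mul_left _ _, by omega, odd_one, coprime_one_left _, ?_⟩
      rw [mul_comm 2 n, digits_sum_mul_pow_mul_sub_one_div one_lt_two hn.ne' h2n]
      simp

/-- Number-theoretic characterization: for positive integers `n, m, u`, one has `n ∣ m`,
`u ≤ 2^n - 1`, `u` odd and coprime to `2^n - 1`, and `u·(2^m-1)/(2^n-1)` having exactly two
nonzero binary digits, if and only if either `m = n ≥ 2` and `u = 1 + 2^k` with
`1 ≤ k ≤ m - 1` and `gcd(m, 2k) ∣ k`, or `m` is even, `n = m/2` and `u = 1`. -/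
theorem two_binary_digits_characterization
    (n m u : ℕ) (hn : 0 < n) (hm : 0 < m) (hu : 0 < u) :
    (n ∣ m ∧ u ≤ 2 ^ n - 1 ∧ Odd u ∧ Nat.Coprime u (2 ^ n - 1) ∧
        (Nat.digits 2 (u * ((2 ^ m - 1) / (2 ^ n - 1)))).sum = 2) ↔
      ((m = n ∧ 2 ≤ m ∧
          ∃ k : ℕ, 1 ≤ k ∧ k ≤ m - 1 ∧ u = 1 + 2 ^ k ∧ Nat.gcd m (2 * k) ∣ k) ∨
        (2 ∣ m ∧ n = m / 2 ∧ u = 1)) :=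
  two_binary_digits_characterization_general n m u hn
end

section
/- Let m be a positive integer, and suppose there exist a, b ∈ {1,…,2^m−1} satisfying all of the following: a ≠ b; a has exactly two nonzero binary digits; b has at most two nonzero binary digits; and (2^m−1)/gcd(m, 2^m−1) divides the integer a − b. Then m = 6. -/
set_option linter.unusedVariables false

private lemma twopow_block {x y : ℕ} (hxy : x ≤ y) : 2^x * (2^(y-x) - 1) + 2^x = 2^y := by
  have h1 : (2:ℕ)^x * 2^(y-x) = 2^y := by rw [← pow_add]; congr 1; omega
  have h2 : 1 ≤ (2:ℕ)^(y-x) := Nat.one_le_two_pow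
  calc 2^x * (2^(y-x) - 1) + 2^x = 2^x * (2^(y-x) - 1 + 1) := by ring
    _ = 2^x * 2^(y-x) := by rw [Nat.sub_add_cancel h2]
    _ = 2^y := h1

private lemma digits_sum_char : ∀ n : ℕ,
    ((Nat.digits 2 n).sum = 0 → n = 0) ∧
    ((Nat.digits 2 n).sum = 1 → ∃ i, n = 2^i) ∧
    ((Nat.digits 2 n).sum = 2 → ∃ i j, j < i ∧ n = 2^i + 2^j) := by
  intro n
  induction n using Nat.strong_induction_on with
  | _ n IH =>
    rcases Nat.eq_zero_or_pos n with h0 | hpos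
    · subst h0; refine ⟨fun _ => rfl, fun h => ?_, fun h => ?_⟩ <;> simp at h
    have hdig : Nat.digits 2 n = n % 2 :: Nat.digits 2 (n / 2) := Nat.digits_def' (by norm_num) hpos
    have hsum : (Nat.digits 2 n).sum = n % 2 + (Nat.digits 2 (n/2)).sum := by
      rw [hdig]; simp
    obtain ⟨ih0, ih1, ih2⟩ := IH (n/2) (by omega)
    refine ⟨?_, ?_, ?_⟩
    · intro h
      have h1 : (Nat.digits 2 (n/2)).sum = 0 := by omega
      have := ih0 h1; omega
    · intro h
      rcases Nat.even_or_odd n with he | ho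
      · have hm : n % 2 = 0 := Nat.even_iff.mp he
        have h1 : (Nat.digits 2 (n/2)).sum = 1 := by omega
        obtain ⟨i, hi⟩ := ih1 h1
        refine ⟨i+1, ?_⟩
        have hn2 : n = 2 * (n/2) := by omega
        rw [hn2, hi, pow_succ]; ring
      · have hm : n % 2 = 1 := Nat.odd_iff.mp ho
        have h1 : (Nat.digits 2 (n/2)).sum = 0 := by omega
        have := ih0 h1
        refine ⟨0, ?_⟩
        rw [pow_zero]; omega
    · intro h
      rcases Nat.even_or_odd n with he | ho
      · have hm : n % 2 = 0 := Nat.even_iff.mp he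
        have h1 : (Nat.digits 2 (n/2)).sum = 2 := by omega
        obtain ⟨i, j, hji, hij⟩ := ih2 h1
        refine ⟨i+1, j+1, by omega, ?_⟩
        have hn2 : n = 2 * (n/2) := by omega
        rw [hn2, hij, pow_succ, pow_succ]; ring
      · have hm : n % 2 = 1 := Nat.odd_iff.mp ho
        have h1 : (Nat.digits 2 (n/2)).sum = 1 := by omega
        obtain ⟨i, hi⟩ := ih1 h1
        refine ⟨i+1, 0, by omega, ?_⟩
        have hn2 : n = 2 * (n/2) + 1 := by omega
        rw [hn2, hi, pow_succ, pow_zero]; ring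

private lemma periodic_bits {D f e m : ℕ} (he : 0 < e) (hem : e ≤ m) (hf : f < 2^e) (hD : D < 2^m)
    (hE : 2^e * D + f = 2^m * f + D) : ∀ p, p < m → D.testBit p = f.testBit (p % e) := by
  have key : ∀ p, p < m → D.testBit p = (if p < e then f.testBit p else D.testBit (p - e)) := by
    intro p hp
    have h1 := Nat.testBit_two_pow_mul_add D hf p
    have h2 := Nat.testBit_two_pow_mul_add f hD p
    rw [hE] at h1
    rw [h2] at h1
    rw [if_pos hp] at h1
    exact h1
  intro p
  induction p using Nat.strong_induction_on with
  | _ p IHp =>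
    intro hp
    have hk := key p hp
    by_cases hpe : p < e
    · rw [if_pos hpe] at hk; rw [hk]; congr 1; exact (Nat.mod_eq_of_lt hpe).symm
    · rw [if_neg hpe] at hk
      rw [hk, IHp (p - e) (by omega) (by omega)]
      congr 1
      conv_rhs => rw [show p = p - e + e from by omega]
      rw [Nat.add_mod_right]

private lemma no_two_in_run {e m f D : ℕ} (he : 0 < e) {z : ℕ} (hz : z < e) (hzf : f.testBit z = false)
    (hper : ∀ p, p < m → D.testBit p = f.testBit (p % e))
    {x y p p' : ℕ} (hy : y ≤ m) (hrun : ∀ q, x ≤ q → q < y → D.testBit q = true)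
    (hp : x ≤ p) (hp' : p' < y) (hpp : p < p') (hcong : p % e = p' % e) : False := by
  have hdvd : e ∣ p' - p := (Nat.modEq_iff_dvd' hpp.le).mp hcong
  have hge : e ≤ p' - p := Nat.le_of_dvd (by omega) hdvd
  have hclt : p % e < e := Nat.mod_lt _ he
  by_cases hcz : p % e = z
  · have h1 := hrun p hp (by omega)
    rw [hper p (by omega), hcz] at h1
    rw [hzf] at h1; exact absurd h1 (by simp)
  · set t₀ := if p % e < z then z - p % e else e + z - p % e with ht₀
    have ht₀lt : 0 < t₀ ∧ t₀ < e := by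
      rw [ht₀]; split_ifs <;> omega
    have hwmod : (p + t₀) % e = z := by
      rw [Nat.add_mod, Nat.mod_eq_of_lt ht₀lt.2]
      rw [ht₀]
      split_ifs with hcase
      · rw [show p % e + (z - p % e) = z from by omega, Nat.mod_eq_of_lt hz]
      · rw [show p % e + (e + z - p % e) = e + z from by omega, Nat.add_mod_left,
          Nat.mod_eq_of_lt hz]
    have h1 := hrun (p + t₀) (by omega) (by omega)
    rw [hper (p + t₀) (by omega), hwmod] at h1
    rw [hzf] at h1; exact absurd h1 (by simp)

private lemma bits_helper {x₁ l₁ x₂ l₂ x₃ l₃ D : ℕ} (h12 : x₁ + l₁ ≤ x₂) (h23 : x₂ + l₂ ≤ x₃)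
    (hD : D = 2^x₁ * (2^l₁ - 1) + 2^x₂ * (2^l₂ - 1) + 2^x₃ * (2^l₃ - 1)) (p : ℕ) :
    D.testBit p = true ↔
      (x₁ ≤ p ∧ p < x₁ + l₁) ∨ (x₂ ≤ p ∧ p < x₂ + l₂) ∨ (x₃ ≤ p ∧ p < x₃ + l₃) := by
  have hlow : 2^x₁ * (2^l₁ - 1) < 2^x₂ := by
    have h1 : 2^x₁ * (2^l₁ - 1) < 2^x₁ * 2^l₁ := by
      have h5 := Nat.one_le_two_pow (n := l₁)
      have h2 := Nat.two_pow_pos x₁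
      have h4 : (2:ℕ)^l₁ - 1 < 2^l₁ := by omega
      exact mul_lt_mul_of_pos_left h4 h2
    calc 2^x₁ * (2^l₁ - 1) < 2^x₁ * 2^l₁ := h1
      _ = 2^(x₁+l₁) := by rw [← pow_add]
      _ ≤ 2^x₂ := Nat.pow_le_pow_right (by norm_num) h12
  have hmid : (2:ℕ)^l₂ - 1 < 2^(x₃ - x₂) := by
    have h1 : (2:ℕ)^l₂ ≤ 2^(x₃-x₂) := Nat.pow_le_pow_right (by norm_num) (by omega)
    have := Nat.one_le_two_pow (n := l₂)
    omega
  have hrw : D = 2^x₂ * ((2^(x₃ - x₂) * (2^l₃ - 1)) + (2^l₂ - 1)) + (2^x₁ * (2^l₁ - 1)) := by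
    rw [hD]
    have h3 : (2:ℕ)^x₃ = 2^x₂ * 2^(x₃-x₂) := by rw [← pow_add]; congr 1; omega
    rw [h3]; ring
  rw [hrw, Nat.testBit_two_pow_mul_add _ hlow p]
  split_ifs with hpx₂
  · -- p < x₂ : low block
    have h0 : (0:ℕ) < 2^x₁ := Nat.two_pow_pos x₁
    have hrw2 : (2:ℕ)^x₁ * (2^l₁ - 1) = 2^x₁ * (2^l₁ - 1) + 0 := by ring
    rw [hrw2, Nat.testBit_two_pow_mul_add _ h0 p]
    split_ifs with hpx₁
    · simp only [Nat.zero_testBit]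
      constructor
      · intro h; exact absurd h (by simp)
      · intro h; omega
    · rw [Nat.testBit_two_pow_sub_one]
      simp only [decide_eq_true_eq]
      omega
  · -- p ≥ x₂ : high part
    rw [Nat.testBit_two_pow_mul_add _ hmid (p - x₂)]
    split_ifs with h3
    · rw [Nat.testBit_two_pow_sub_one]
      simp only [decide_eq_true_eq]
      omega
    · rw [Nat.testBit_two_pow_sub_one]
      simp only [decide_eq_true_eq]
      omega

set_option maxHeartbeats 1600000 in
private lemma parts_pigeon {e r m f D : ℕ} (he : 0 < e) (hr : 3 ≤ r) (hm : m = e * r)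
    {z : ℕ} (hz : z < e) (hzf : f.testBit z = false)
    (hper : ∀ p, p < m → D.testBit p = f.testBit (p % e))
    (x₁ y₁ x₂ y₂ x₃ y₃ : ℕ) (hy₁ : y₁ ≤ m) (hy₂ : y₂ ≤ m) (hy₃ : y₃ ≤ m)
    (hcov : ∀ p, p < m → D.testBit p = true →
        (x₁ ≤ p ∧ p < y₁) ∨ (x₂ ≤ p ∧ p < y₂) ∨ (x₃ ≤ p ∧ p < y₃))
    (hrun₁ : ∀ q, x₁ ≤ q → q < y₁ → D.testBit q = true)
    (hrun₂ : ∀ q, x₂ ≤ q → q < y₂ → D.testBit q = true)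
    (hrun₃ : ∀ q, x₃ ≤ q → q < y₃ → D.testBit q = true)
    {c : ℕ} (hc : c < e) (hcf : f.testBit c = true) :
    r = 3 ∧ (∃ t, t < 3 ∧ x₁ ≤ c + t*e ∧ c + t*e < y₁)
        ∧ (∃ t, t < 3 ∧ x₂ ≤ c + t*e ∧ c + t*e < y₂)
        ∧ (∃ t, t < 3 ∧ x₃ ≤ c + t*e ∧ c + t*e < y₃) := by
  have hlt : ∀ t, t < r → c + t*e < m := by
    intro t ht
    have h1 : t*e + e ≤ r*e := by
      have : (t+1)*e ≤ r*e := Nat.mul_le_mul_right e (by omega)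
      calc t*e + e = (t+1)*e := by ring
        _ ≤ r*e := this
    have : m = r * e := by rw [hm]; ring
    omega
  have helt : ∀ t, t < r → D.testBit (c + t*e) = true := by
    intro t ht
    rw [hper _ (hlt t ht), Nat.add_mul_mod_self_right, Nat.mod_eq_of_lt hc]
    exact hcf
  have hmod : ∀ t t' : ℕ, (c + t*e) % e = (c + t'*e) % e := by
    intro t t'; rw [Nat.add_mul_mod_self_right, Nat.add_mul_mod_self_right]
  have hK : ∀ x y, y ≤ m → (∀ q, x ≤ q → q < y → D.testBit q = true) →
      ∀ t t' : ℕ, t < t' → (x ≤ c + t*e ∧ c + t*e < y) → (x ≤ c + t'*e ∧ c + t'*e < y) → False := by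
    intro x y hy hrun t t' htt hmem hmem'
    exact no_two_in_run he hz hzf hper hy hrun hmem.1 hmem'.2
      (by have : t*e + e ≤ t'*e := by
            have : (t+1)*e ≤ t'*e := Nat.mul_le_mul_right e (by omega)
            calc t*e + e = (t+1)*e := by ring
              _ ≤ t'*e := this
          omega)
      (hmod t t')
  -- choose part index for each t
  have hch : ∀ t : ℕ, ∃ gv : ℕ, gv < 3 ∧ (t < r →
      ((gv = 0 → (x₁ ≤ c + t*e ∧ c + t*e < y₁)) ∧
       (gv = 1 → (x₂ ≤ c + t*e ∧ c + t*e < y₂)) ∧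
       (gv = 2 → (x₃ ≤ c + t*e ∧ c + t*e < y₃)))) := by
    intro t
    by_cases ht : t < r
    · rcases hcov _ (hlt t ht) (helt t ht) with h | h | h
      · exact ⟨0, by omega, fun _ => ⟨fun _ => h, fun hg => absurd hg (by omega), fun hg => absurd hg (by omega)⟩⟩
      · exact ⟨1, by omega, fun _ => ⟨fun hg => absurd hg (by omega), fun _ => h, fun hg => absurd hg (by omega)⟩⟩
      · exact ⟨2, by omega, fun _ => ⟨fun hg => absurd hg (by omega), fun hg => absurd hg (by omega), fun _ => h⟩⟩
    · exact ⟨0, by omega, fun h => absurd h ht⟩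
  choose g hg3 hgm using hch
  have hginj : ∀ t t' : ℕ, t < r → t' < r → t < t' → g t ≠ g t' := by
    intro t t' ht ht' htt heq
    obtain ⟨m0, m1, m2⟩ := hgm t ht
    obtain ⟨m0', m1', m2'⟩ := hgm t' ht'
    have h3 := hg3 t
    have : g t = 0 ∨ g t = 1 ∨ g t = 2 := by omega
    rcases this with h | h | h
    · exact hK x₁ y₁ hy₁ hrun₁ t t' htt (m0 h) (m0' (by omega))
    · exact hK x₂ y₂ hy₂ hrun₂ t t' htt (m1 h) (m1' (by omega))
    · exact hK x₃ y₃ hy₃ hrun₃ t t' htt (m2 h) (m2' (by omega))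
  have hr3 : r = 3 := by
    by_contra hne
    have h01 := hginj 0 1 (by omega) (by omega) (by omega)
    have h02 := hginj 0 2 (by omega) (by omega) (by omega)
    have h03 := hginj 0 3 (by omega) (by omega) (by omega)
    have h12 := hginj 1 2 (by omega) (by omega) (by omega)
    have h13 := hginj 1 3 (by omega) (by omega) (by omega)
    have h23 := hginj 2 3 (by omega) (by omega) (by omega)
    have := hg3 0; have := hg3 1; have := hg3 2; have := hg3 3
    omega
  have h01 := hginj 0 1 (by omega) (by omega) (by omega)
  have h02 := hginj 0 2 (by omega) (by omega) (by omega)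
  have h12 := hginj 1 2 (by omega) (by omega) (by omega)
  have hb0 := hg3 0; have hb1 := hg3 1; have hb2 := hg3 2
  obtain ⟨m00, m01, m02⟩ := hgm 0 (by omega)
  obtain ⟨m10, m11, m12⟩ := hgm 1 (by omega)
  obtain ⟨m20, m21, m22⟩ := hgm 2 (by omega)
  refine ⟨hr3, ?_, ?_, ?_⟩
  · have : g 0 = 0 ∨ g 1 = 0 ∨ g 2 = 0 := by omega
    rcases this with h | h | h
    exacts [⟨0, by omega, m00 h⟩, ⟨1, by omega, m10 h⟩, ⟨2, by omega, m20 h⟩]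
  · have : g 0 = 1 ∨ g 1 = 1 ∨ g 2 = 1 := by omega
    rcases this with h | h | h
    exacts [⟨0, by omega, m01 h⟩, ⟨1, by omega, m11 h⟩, ⟨2, by omega, m21 h⟩]
  · have : g 0 = 2 ∨ g 1 = 2 ∨ g 2 = 2 := by omega
    rcases this with h | h | h
    exacts [⟨0, by omega, m02 h⟩, ⟨1, by omega, m12 h⟩, ⟨2, by omega, m22 h⟩]

private lemma finish_e2 {e m f D : ℕ} (he : 0 < e)
    {z : ℕ} (hz : z < e) (hzf : f.testBit z = false)
    (hper : ∀ p, p < m → D.testBit p = f.testBit (p % e))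
    {t s v w : ℕ} (hts : t < s) (hsm : s ≤ m) (hvm : v ≤ m) (hwm : w < m)
    (hrun₁ : ∀ q, t ≤ q → q < s → D.testBit q = true)
    (hrun₂ : ∀ q, s + 1 ≤ q → q < v → D.testBit q = true)
    (hsing : ∀ c, c < e → f.testBit c = true → ∃ tt, c + tt * e = w)
    (hnon : s + 1 < v) : e = 2 := by
  have hres : ∀ q, q < m → D.testBit q = true → q % e = w % e := by
    intro q hq hbit
    have hf : f.testBit (q % e) = true := by rw [← hper q hq]; exact hbit
    obtain ⟨tt, htt⟩ := hsing (q % e) (Nat.mod_lt _ he) hf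
    calc q % e = (q % e + tt * e) % e := by
          rw [Nat.add_mul_mod_self_right, Nat.mod_eq_of_lt (Nat.mod_lt _ he)]
      _ = w % e := by rw [htt]
  have h1 : D.testBit t = true := hrun₁ t le_rfl hts
  have h2 : D.testBit (s-1) = true := hrun₁ (s-1) (by omega) (by omega)
  have ht' : t = s - 1 := by
    by_contra hne
    have hc1 := hres t (by omega) h1
    have hc2 := hres (s-1) (by omega) h2
    exact no_two_in_run he hz hzf hper hsm hrun₁ (le_refl t) (show s-1 < s by omega)
      (by omega) (hc1.trans hc2.symm)
  have h3 : D.testBit (s+1) = true := hrun₂ _ le_rfl hnon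
  have hsv : s + 1 < m := Nat.lt_of_lt_of_le hnon hvm
  have e_dvd : e ∣ 2 := by
    have ha := hres (s-1) (by omega) h2
    have hb := hres (s+1) (by omega) h3
    have hab : (s-1) % e = (s+1) % e := by rw [ha, hb]
    have := (Nat.modEq_iff_dvd' (by omega : s-1 ≤ s+1)).mp hab
    have h2' : s + 1 - (s - 1) = 2 := by omega
    rwa [h2'] at this
  have he1 : e ≠ 1 := by
    intro h1e
    subst h1e
    have hf : f.testBit (t % 1) = true := by rw [← hper t (by omega)]; exact h1
    have hz' : t % 1 = z := by omega
    rw [hz', hzf] at hf; exact absurd hf (by simp)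
  have := Nat.le_of_dvd (by norm_num) e_dvd
  omega

set_option maxHeartbeats 2000000 in
private lemma core {e r m f D P Q : ℕ} (he : 0 < e) (hr : 3 ≤ r) (hm : m = e * r)
    (hf1 : 0 < f) (hf2 : f < 2^e - 1)
    (hper : ∀ p, p < m → D.testBit p = f.testBit (p % e))
    (hP2 : (∃ i, i < m ∧ P = 2^i) ∨ ∃ i j, j < i ∧ i < m ∧ P = 2^i + 2^j)
    (hQ2 : (∃ i, i < m ∧ Q = 2^i) ∨ ∃ i j, j < i ∧ i < m ∧ Q = 2^i + 2^j)
    (hPQ : P = Q + D) (hDpos : 0 < D) :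
    e = 2 ∧ r = 3 := by
  have hflt : f < 2^e := lt_of_lt_of_le hf2 (Nat.sub_le _ _)
  obtain ⟨z, hz, hzf⟩ : ∃ z, z < e ∧ f.testBit z = false := by
    by_contra hcon
    push_neg at hcon
    have hfeq : f = 2^e - 1 := by
      apply Nat.eq_of_testBit_eq
      intro q
      rw [Nat.testBit_two_pow_sub_one]
      by_cases hq : q < e
      · cases hb : f.testBit q with
        | false => exact absurd hb (hcon q hq)
        | true => simp [hq]
      · have hlt : f < 2^q := lt_of_lt_of_le hflt (Nat.pow_le_pow_right (by norm_num) (by omega))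
        rw [Nat.testBit_lt_two_pow hlt]
        simp [hq]
    omega
  obtain ⟨o, ho, hof⟩ : ∃ o, o < e ∧ f.testBit o = true := by
    by_contra hcon
    push_neg at hcon
    have hfeq : f = 0 := by
      apply Nat.eq_of_testBit_eq
      intro q
      rw [Nat.zero_testBit]
      by_cases hq : q < e
      · cases hb : f.testBit q with
        | false => rfl
        | true => exact absurd hb (hcon q hq)
      · exact Nat.testBit_lt_two_pow (lt_of_lt_of_le hflt (Nat.pow_le_pow_right (by norm_num) (by omega)))
    omega
  have hP2F : ∀ x₁ y₁ x₂ y₂ : ℕ, y₁ ≤ m → y₂ ≤ m →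
      (∀ p, p < m → D.testBit p = true → (x₁ ≤ p ∧ p < y₁) ∨ (x₂ ≤ p ∧ p < y₂)) →
      (∀ q, x₁ ≤ q → q < y₁ → D.testBit q = true) →
      (∀ q, x₂ ≤ q → q < y₂ → D.testBit q = true) → False := by
    intro x₁ y₁ x₂ y₂ hy₁ hy₂ hcov hr1 hr2
    obtain ⟨-, -, -, h3⟩ := parts_pigeon he hr hm hz hzf hper x₁ y₁ x₂ y₂ 0 0 hy₁ hy₂
      (by omega)
      (fun p hp hb => by
        rcases hcov p hp hb with h | h
        exacts [Or.inl h, Or.inr (Or.inl h)])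
      hr1 hr2 (fun q h1 h2 => absurd h2 (by omega)) ho hof
    obtain ⟨t, -, -, hlt⟩ := h3
    omega
  rcases hP2 with ⟨i, him, hPi⟩ | ⟨i, j, hji, him, hPij⟩
  · rcases hQ2 with ⟨s, hsm, hQs⟩ | ⟨s, t0, ht0s, hsm, hQst⟩
    · -- (1,1)  P = 2^i, Q = 2^s
      subst hPi; subst hQs
      have hlt : (2:ℕ)^s < 2^i := by linarith [hPQ, hDpos]
      have hsi : s < i := (Nat.pow_lt_pow_iff_right (by norm_num)).mp hlt
      have hB := twopow_block hsi.le
      have hDb : D = 2^s * (2^(i-s) - 1) + 2^i * (2^0 - 1) + 2^i * (2^0 - 1) := by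
        simp only [show (2:ℕ)^1 - 1 = 1 from rfl, show (2:ℕ)^0 - 1 = 0 from rfl, mul_one, mul_zero, add_zero]
        linarith [hB, hPQ]
      have htb := fun p => bits_helper (show s + (i-s) ≤ i by omega) (show i + 0 ≤ i by omega) hDb p
      exact False.elim <| hP2F s i 0 0 (by omega) (by omega)
        (fun p hp hb => by
          rcases (htb p).mp hb with h | h | h
          · exact Or.inl ⟨h.1, by omega⟩
          · omega
          · omega)
        (fun q h1 h2 => (htb q).mpr (Or.inl ⟨h1, by omega⟩))
        (fun q h1 h2 => absurd h2 (by omega))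
    · -- (1,2)  P = 2^i, Q = 2^s + 2^t0
      subst hPi; subst hQst
      have hlt : (2:ℕ)^s < 2^i := by linarith [hPQ, hDpos, Nat.two_pow_pos t0]
      have hsi : s < i := (Nat.pow_lt_pow_iff_right (by norm_num)).mp hlt
      have hB1 := twopow_block ht0s.le
      have hB2 := twopow_block (show s+1 ≤ i by omega)
      have hps : (2:ℕ)^(s+1) = 2^s + 2^s := by rw [pow_succ]; ring
      have hDb : D = 2^t0 * (2^(s-t0) - 1) + 2^(s+1) * (2^(i-(s+1)) - 1) + 2^i * (2^0 - 1) := by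
        simp only [show (2:ℕ)^1 - 1 = 1 from rfl, show (2:ℕ)^0 - 1 = 0 from rfl, mul_one, mul_zero, add_zero]
        linarith [hB1, hB2, hps, hPQ]
      have htb := fun p => bits_helper (show t0 + (s-t0) ≤ s+1 by omega)
        (show (s+1) + (i-(s+1)) ≤ i by omega) hDb p
      exact False.elim <| hP2F t0 s (s+1) i (by omega) (by omega)
        (fun p hp hb => by
          rcases (htb p).mp hb with h | h | h
          · exact Or.inl ⟨h.1, by omega⟩
          · exact Or.inr ⟨h.1, by omega⟩
          · omega)
        (fun q h1 h2 => (htb q).mpr (Or.inl ⟨h1, by omega⟩))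
        (fun q h1 h2 => (htb q).mpr (Or.inr (Or.inl ⟨h1, by omega⟩)))
  · have hjipow : (2:ℕ)^j < 2^i := (Nat.pow_lt_pow_iff_right (by norm_num)).mpr hji
    rcases hQ2 with ⟨s, hsm, hQs⟩ | ⟨s, t0, ht0s, hsm, hQst⟩
    · -- (2,1)  P = 2^i + 2^j, Q = 2^s
      subst hPij; subst hQs
      have hsi : s ≤ i := by
        by_contra hc
        have h1 : (2:ℕ)^(i+1) ≤ 2^s := Nat.pow_le_pow_right (by norm_num) (by omega)
        have h2 : (2:ℕ)^(i+1) = 2^i + 2^i := by rw [pow_succ]; ring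
        linarith [hPQ, hDpos, hjipow]
      rcases eq_or_lt_of_le hsi with heq | hslt
      · -- s = i : D = 2^j
        have hDj : D = 2^j := by rw [heq] at hPQ; linarith [hPQ]
        have hDb : D = 2^j * (2^1 - 1) + 2^(j+1) * (2^0 - 1) + 2^(j+1) * (2^0 - 1) := by
          simp only [show (2:ℕ)^1 - 1 = 1 from rfl, show (2:ℕ)^0 - 1 = 0 from rfl, mul_one, mul_zero, add_zero]
          linarith [hDj]
        have htb := fun p => bits_helper (show j + 1 ≤ j+1 by omega)
          (show (j+1) + 0 ≤ j+1 by omega) hDb p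
        exact False.elim <| hP2F j (j+1) 0 0 (by omega) (by omega)
          (fun p hp hb => by
            rcases (htb p).mp hb with h | h | h
            · exact Or.inl ⟨h.1, by omega⟩
            · omega
            · omega)
          (fun q h1 h2 => (htb q).mpr (Or.inl ⟨h1, by omega⟩))
          (fun q h1 h2 => absurd h2 (by omega))
      · by_cases hsj : s ≤ j
        · -- blocks [s,j) ∪ {i}
          have hB1 := twopow_block hsj
          have hDb : D = 2^s * (2^(j-s) - 1) + 2^i * (2^1 - 1) + 2^(i+1) * (2^0 - 1) := by
            simp only [show (2:ℕ)^1 - 1 = 1 from rfl, show (2:ℕ)^0 - 1 = 0 from rfl, mul_one, mul_zero, add_zero]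
            linarith [hB1, hPQ]
          have htb := fun p => bits_helper (show s + (j-s) ≤ i by omega)
            (show i + 1 ≤ i+1 by omega) hDb p
          exact False.elim <| hP2F s j i (i+1) (by omega) (by omega)
            (fun p hp hb => by
              rcases (htb p).mp hb with h | h | h
              · exact Or.inl ⟨h.1, by omega⟩
              · exact Or.inr ⟨h.1, by omega⟩
              · omega)
            (fun q h1 h2 => (htb q).mpr (Or.inl ⟨h1, by omega⟩))
            (fun q h1 h2 => (htb q).mpr (Or.inr (Or.inl ⟨h1, by omega⟩)))
        · -- j < s < i : blocks {j} ∪ [s,i)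
          have hB1 := twopow_block hslt.le
          have hDb : D = 2^j * (2^1 - 1) + 2^s * (2^(i-s) - 1) + 2^i * (2^0 - 1) := by
            simp only [show (2:ℕ)^1 - 1 = 1 from rfl, show (2:ℕ)^0 - 1 = 0 from rfl, mul_one, mul_zero, add_zero]
            linarith [hB1, hPQ]
          have htb := fun p => bits_helper (show j + 1 ≤ s by omega)
            (show s + (i-s) ≤ i by omega) hDb p
          exact False.elim <| hP2F j (j+1) s i (by omega) (by omega)
            (fun p hp hb => by
              rcases (htb p).mp hb with h | h | h
              · exact Or.inl ⟨h.1, by omega⟩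
              · exact Or.inr ⟨h.1, by omega⟩
              · omega)
            (fun q h1 h2 => (htb q).mpr (Or.inl ⟨h1, by omega⟩))
            (fun q h1 h2 => (htb q).mpr (Or.inr (Or.inl ⟨h1, by omega⟩)))
    · -- (2,2)  P = 2^i + 2^j, Q = 2^s + 2^t0
      subst hPij; subst hQst
      have ht0spow : (2:ℕ)^t0 < 2^s := (Nat.pow_lt_pow_iff_right (by norm_num)).mpr ht0s
      have hsi : s ≤ i := by
        by_contra hc
        have h1 : (2:ℕ)^(i+1) ≤ 2^s := Nat.pow_le_pow_right (by norm_num) (by omega)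
        have h2 : (2:ℕ)^(i+1) = 2^i + 2^i := by rw [pow_succ]; ring
        linarith [hPQ, hDpos, hjipow, Nat.two_pow_pos t0]
      rcases eq_or_lt_of_le hsi with heq | hslt
      · -- s = i : D + 2^t0 = 2^j
        have hDt : D + 2^t0 = 2^j := by rw [heq] at hPQ; linarith [hPQ]
        have ht0j : t0 < j := by
          have hlt2 : (2:ℕ)^t0 < 2^j := by linarith [hDt, hDpos]
          exact (Nat.pow_lt_pow_iff_right (by norm_num)).mp hlt2
        have hB1 := twopow_block ht0j.le
        have hDb : D = 2^t0 * (2^(j-t0) - 1) + 2^j * (2^0 - 1) + 2^j * (2^0 - 1) := by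
          simp only [show (2:ℕ)^1 - 1 = 1 from rfl, show (2:ℕ)^0 - 1 = 0 from rfl, mul_one, mul_zero, add_zero]
          linarith [hB1, hDt]
        have htb := fun p => bits_helper (show t0 + (j-t0) ≤ j by omega)
          (show j + 0 ≤ j by omega) hDb p
        exact False.elim <| hP2F t0 j 0 0 (by omega) (by omega)
          (fun p hp hb => by
            rcases (htb p).mp hb with h | h | h
            · exact Or.inl ⟨h.1, by omega⟩
            · omega
            · omega)
          (fun q h1 h2 => (htb q).mpr (Or.inl ⟨h1, by omega⟩))
          (fun q h1 h2 => absurd h2 (by omega))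
      · by_cases htj : t0 = j
        · -- t0 = j : D + 2^s = 2^i
          subst htj
          have hB1 := twopow_block hslt.le
          have hDb : D = 2^s * (2^(i-s) - 1) + 2^i * (2^0 - 1) + 2^i * (2^0 - 1) := by
            simp only [show (2:ℕ)^1 - 1 = 1 from rfl, show (2:ℕ)^0 - 1 = 0 from rfl, mul_one, mul_zero, add_zero]
            linarith [hB1, hPQ]
          have htb := fun p => bits_helper (show s + (i-s) ≤ i by omega)
            (show i + 0 ≤ i by omega) hDb p
          exact False.elim <| hP2F s i 0 0 (by omega) (by omega)
            (fun p hp hb => by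
              rcases (htb p).mp hb with h | h | h
              · exact Or.inl ⟨h.1, by omega⟩
              · omega
              · omega)
            (fun q h1 h2 => (htb q).mpr (Or.inl ⟨h1, by omega⟩))
            (fun q h1 h2 => absurd h2 (by omega))
        · by_cases hsj : s = j
          · -- s = j : D + 2^t0 = 2^i
            subst hsj
            have hB1 := twopow_block (show t0 ≤ i by omega)
            have hDb : D = 2^t0 * (2^(i-t0) - 1) + 2^i * (2^0 - 1) + 2^i * (2^0 - 1) := by
              simp only [show (2:ℕ)^1 - 1 = 1 from rfl, show (2:ℕ)^0 - 1 = 0 from rfl, mul_one, mul_zero, add_zero]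
              linarith [hB1, hPQ]
            have htb := fun p => bits_helper (show t0 + (i-t0) ≤ i by omega)
              (show i + 0 ≤ i by omega) hDb p
            exact False.elim <| hP2F t0 i 0 0 (by omega) (by omega)
              (fun p hp hb => by
                rcases (htb p).mp hb with h | h | h
                · exact Or.inl ⟨h.1, by omega⟩
                · omega
                · omega)
              (fun q h1 h2 => (htb q).mpr (Or.inl ⟨h1, by omega⟩))
              (fun q h1 h2 => absurd h2 (by omega))
          · rcases lt_or_gt_of_ne hsj with hsltj | hjlts
            · -- A-type : t0 < s < j < i
              have hB1 := twopow_block ht0s.le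
              have hB2 := twopow_block (show s+1 ≤ j by omega)
              have hps : (2:ℕ)^(s+1) = 2^s + 2^s := by rw [pow_succ]; ring
              have hDb : D = 2^t0 * (2^(s-t0) - 1) + 2^(s+1) * (2^(j-(s+1)) - 1) + 2^i * (2^1 - 1) := by
                simp only [show (2:ℕ)^1 - 1 = 1 from rfl, show (2:ℕ)^0 - 1 = 0 from rfl, mul_one, mul_zero, add_zero]
                linarith [hB1, hB2, hps, hPQ]
              have htb := fun p => bits_helper (show t0 + (s-t0) ≤ s+1 by omega)
                (show (s+1) + (j-(s+1)) ≤ i by omega) hDb p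
              have hcov : ∀ p, p < m → D.testBit p = true →
                  (t0 ≤ p ∧ p < s) ∨ (s+1 ≤ p ∧ p < j) ∨ (i ≤ p ∧ p < i+1) := by
                intro p hp hb
                rcases (htb p).mp hb with h | h | h
                exacts [Or.inl ⟨h.1, by omega⟩, Or.inr (Or.inl ⟨h.1, by omega⟩),
                  Or.inr (Or.inr ⟨h.1, by omega⟩)]
              have hrun1 : ∀ q, t0 ≤ q → q < s → D.testBit q = true :=
                fun q h1 h2 => (htb q).mpr (Or.inl ⟨h1, by omega⟩)
              have hrun2 : ∀ q, s+1 ≤ q → q < j → D.testBit q = true :=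
                fun q h1 h2 => (htb q).mpr (Or.inr (Or.inl ⟨h1, by omega⟩))
              have hrun3 : ∀ q, i ≤ q → q < i+1 → D.testBit q = true :=
                fun q h1 h2 => (htb q).mpr (Or.inr (Or.inr ⟨h1, by omega⟩))
              have hpg := fun (c : ℕ) (hc : c < e) (hcf : f.testBit c = true) =>
                parts_pigeon he hr hm hz hzf hper t0 s (s+1) j i (i+1)
                  (by omega) (by omega) (by omega) hcov hrun1 hrun2 hrun3 hc hcf
              have hr3 := (hpg o ho hof).1
              have hsing : ∀ c, c < e → f.testBit c = true → ∃ tt, c + tt*e = i := by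
                intro c hc hcf
                obtain ⟨tt, -, h1, h2⟩ := (hpg c hc hcf).2.2.2
                exact ⟨tt, by omega⟩
              have hbiti : D.testBit i = true := hrun3 i (le_refl i) (by omega)
              have hfi : f.testBit (i % e) = true := by rw [← hper i him]; exact hbiti
              obtain ⟨tt, -, hm2a, hm2b⟩ := (hpg (i % e) (Nat.mod_lt _ he) hfi).2.2.1
              have hnon : s + 1 < j := by omega
              exact ⟨finish_e2 he hz hzf hper (show t0 < s from ht0s) (by omega) (by omega) him
                hrun1 hrun2 hsing hnon, hr3⟩
            · -- j < s : split on t0 vs j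
              rcases lt_trichotomy t0 j with ht0ltj | ht0eqj | ht0j
              · -- t0 < j < s < i : blocks [t0,j) ∪ [s,i)
                have hBa := twopow_block ht0ltj.le
                have hBb := twopow_block hslt.le
                have hDb : D = 2^t0 * (2^(j-t0) - 1) + 2^s * (2^(i-s) - 1) + 2^i * (2^0 - 1) := by
                  simp only [show (2:ℕ)^1 - 1 = 1 from rfl, show (2:ℕ)^0 - 1 = 0 from rfl, mul_one, mul_zero, add_zero]
                  linarith [hBa, hBb, hPQ]
                have htb := fun p => bits_helper (show t0 + (j-t0) ≤ s by omega)
                  (show s + (i-s) ≤ i by omega) hDb p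
                exact False.elim <| hP2F t0 j s i (by omega) (by omega)
                  (fun p hp hb => by
                    rcases (htb p).mp hb with h | h | h
                    · exact Or.inl ⟨h.1, by omega⟩
                    · exact Or.inr ⟨h.1, by omega⟩
                    · omega)
                  (fun q h1 h2 => (htb q).mpr (Or.inl ⟨h1, by omega⟩))
                  (fun q h1 h2 => (htb q).mpr (Or.inr (Or.inl ⟨h1, by omega⟩)))
              · exact absurd ht0eqj htj
              -- C-type : j < t0 < s < i
              have hB1 := twopow_block ht0s.le
              have hB2 := twopow_block (show s+1 ≤ i by omega)
              have hps : (2:ℕ)^(s+1) = 2^s + 2^s := by rw [pow_succ]; ring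
              have hDb : D = 2^j * (2^1 - 1) + 2^t0 * (2^(s-t0) - 1) + 2^(s+1) * (2^(i-(s+1)) - 1) := by
                simp only [show (2:ℕ)^1 - 1 = 1 from rfl, show (2:ℕ)^0 - 1 = 0 from rfl, mul_one, mul_zero, add_zero]
                linarith [hB1, hB2, hps, hPQ]
              have htb := fun p => bits_helper (show j + 1 ≤ t0 by omega)
                (show t0 + (s-t0) ≤ s+1 by omega) hDb p
              have hcov : ∀ p, p < m → D.testBit p = true →
                  (j ≤ p ∧ p < j+1) ∨ (t0 ≤ p ∧ p < s) ∨ (s+1 ≤ p ∧ p < i) := by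
                intro p hp hb
                rcases (htb p).mp hb with h | h | h
                exacts [Or.inl ⟨h.1, by omega⟩, Or.inr (Or.inl ⟨h.1, by omega⟩),
                  Or.inr (Or.inr ⟨h.1, by omega⟩)]
              have hrun1 : ∀ q, j ≤ q → q < j+1 → D.testBit q = true :=
                fun q h1 h2 => (htb q).mpr (Or.inl ⟨h1, by omega⟩)
              have hrun2 : ∀ q, t0 ≤ q → q < s → D.testBit q = true :=
                fun q h1 h2 => (htb q).mpr (Or.inr (Or.inl ⟨h1, by omega⟩))
              have hrun3 : ∀ q, s+1 ≤ q → q < i → D.testBit q = true :=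
                fun q h1 h2 => (htb q).mpr (Or.inr (Or.inr ⟨h1, by omega⟩))
              have hpg := fun (c : ℕ) (hc : c < e) (hcf : f.testBit c = true) =>
                parts_pigeon he hr hm hz hzf hper j (j+1) t0 s (s+1) i
                  (by omega) (by omega) (by omega) hcov hrun1 hrun2 hrun3 hc hcf
              have hr3 := (hpg o ho hof).1
              have hsing : ∀ c, c < e → f.testBit c = true → ∃ tt, c + tt*e = j := by
                intro c hc hcf
                obtain ⟨tt, -, h1, h2⟩ := (hpg c hc hcf).2.1
                exact ⟨tt, by omega⟩
              have hbitj : D.testBit j = true := hrun1 j (le_refl j) (by omega)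
              have hfj : f.testBit (j % e) = true := by
                rw [← hper j (by omega)]; exact hbitj
              obtain ⟨tt, -, hm3a, hm3b⟩ := (hpg (j % e) (Nat.mod_lt _ he) hfj).2.2.2
              have hnon : s + 1 < i := by omega
              exact ⟨finish_e2 he hz hzf hper (show t0 < s from ht0s) (by omega) (by omega)
                (show j < m by omega) hrun2 hrun3 hsing hnon, hr3⟩

private lemma main_branch {m e r N S P Q : ℕ}
    (hm2 : 2 ≤ 2^m) (hepos : 0 < e) (hemle : e ≤ m) (hm_er : m = e * r) (hrge : 3 ≤ r)
    (hN : N = 2^m - 1) (hgeo : (2^e - 1) * S = 2^m - 1)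
    (hQ1 : 1 ≤ Q) (hPN : P ≤ N) (hQP : Q < P) (hSPQ : (S:ℤ) ∣ (P:ℤ) - (Q:ℤ))
    (hPf : (∃ i', i' < m ∧ P = 2^i') ∨ ∃ i' j', j' < i' ∧ i' < m ∧ P = 2^i' + 2^j')
    (hQf : (∃ i', i' < m ∧ Q = 2^i') ∨ ∃ i' j', j' < i' ∧ i' < m ∧ Q = 2^i' + 2^j') :
    m = 6 := by
  have hSpos : 0 < S := by
    rcases Nat.eq_zero_or_pos S with h0 | hpos
    · rw [h0, Nat.mul_zero] at hgeo; omega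
    · exact hpos
  set D := P - Q with hDdef
  have hPQ : P = Q + D := by clear hPf hQf hSPQ; omega
  have hDpos : 0 < D := by clear hPf hQf hSPQ; omega
  have hSD : S ∣ D := by
    have h1 : ((D:ℕ):ℤ) = (P:ℤ) - Q := by rw [hDdef]; push_cast [Nat.cast_sub hQP.le]; ring
    have h2 : (S:ℤ) ∣ ((D:ℕ):ℤ) := by rw [h1]; exact hSPQ
    exact_mod_cast h2
  set f := D / S with hf
  have hfS : D = S * f := (Nat.mul_div_cancel' hSD).symm
  have hf1 : 0 < f := by
    rcases Nat.eq_zero_or_pos f with h0 | hpos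
    · rw [h0, Nat.mul_zero] at hfS; omega
    · exact hpos
  have hDle : D ≤ N - 1 := by clear hPf hQf hSPQ hSD; omega
  have hf2 : f < 2^e - 1 := by
    by_contra hge
    push_neg at hge
    have h1 : (2^e - 1) * S ≤ f * S := Nat.mul_le_mul_right S hge
    rw [hgeo, mul_comm] at h1
    clear hPf hQf hSPQ hSD
    omega
  have hflt2 : f < 2^e := lt_of_lt_of_le hf2 (Nat.sub_le _ _)
  have hDlt : D < 2^m := by clear hPf hQf hSPQ hSD; omega
  have hkey : D * (2^e - 1) = f * (2^m - 1) := by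
    rw [hfS, ← hgeo]; ring
  have hE : 2^e * D + f = 2^m * f + D := by
    zify
    have h1 := hkey
    zify [Nat.one_le_two_pow] at h1
    linarith [h1]
  have hper := periodic_bits hepos hemle hflt2 hDlt hE
  obtain ⟨he2, hr3⟩ := core hepos hrge hm_er hf1 hf2 hper hPf hQf hPQ hDpos
  rw [he2, hr3] at hm_er
  norm_num at hm_er
  exact hm_er

/-- If there exist distinct `a, b ∈ {1, …, 2^m - 1}` such that `a` has exactly two nonzero
binary digits, `b` has at most two nonzero binary digits, and `(2^m - 1)/gcd(m, 2^m - 1)`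
divides the integer `a - b`, then `m = 6`. -/
theorem exceptional_binary_digit_configuration
    (m : ℕ) (hm : 0 < m)
    (h : ∃ a b : ℕ, 1 ≤ a ∧ a ≤ 2 ^ m - 1 ∧ 1 ≤ b ∧ b ≤ 2 ^ m - 1 ∧ a ≠ b ∧
      (Nat.digits 2 a).sum = 2 ∧ (Nat.digits 2 b).sum ≤ 2 ∧
      (((2 ^ m - 1) / Nat.gcd m (2 ^ m - 1) : ℕ) : ℤ) ∣ (a : ℤ) - (b : ℤ)) :
    m = 6 := by
  obtain ⟨a, b, ha1, haN, hb1, hbN, hab, hsa, hsb, hdvd⟩ := h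
  have hm2 : 2 ≤ 2^m := by
    calc 2 = 2^1 := (pow_one 2).symm
      _ ≤ 2^m := Nat.pow_le_pow_right (by norm_num) hm
  obtain ⟨i, j, hji, haij⟩ := (digits_sum_char a).2.2 hsa
  have hbform : (∃ s, b = 2^s) ∨ (∃ s t, t < s ∧ b = 2^s + 2^t) := by
    have hc := digits_sum_char b
    have h3 : (Nat.digits 2 b).sum = 0 ∨ (Nat.digits 2 b).sum = 1 ∨ (Nat.digits 2 b).sum = 2 := by
      omega
    rcases h3 with h0 | h1 | h2
    · exact absurd (hc.1 h0) (by omega)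
    · exact Or.inl (hc.2.1 h1)
    · obtain ⟨s, t, hts, hb'⟩ := hc.2.2 h2; exact Or.inr ⟨s, t, hts, hb'⟩
  have hilt : i < m := by
    have h1 : (2:ℕ)^i < 2^m := by
      have h2 : (2:ℕ)^i ≤ a := by rw [haij]; exact Nat.le_add_right _ _
      omega
    exact (Nat.pow_lt_pow_iff_right (by norm_num)).mp h1
  have hblt : ∀ s : ℕ, 2^s ≤ b → s < m := by
    intro s hs
    have h1 : (2:ℕ)^s < 2^m := by omega
    exact (Nat.pow_lt_pow_iff_right (by norm_num)).mp h1
  set N := 2^m - 1 with hN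
  set d := Nat.gcd m N with hd
  by_cases hd1 : d = 1
  · exfalso
    rw [hd1, Nat.div_one] at hdvd
    have habs : |(a:ℤ) - b| < (N:ℤ) := by
      rw [abs_lt]; constructor <;> omega
    have hab0 : (a:ℤ) - b = 0 := Int.eq_zero_of_abs_lt_dvd hdvd habs
    have : a = b := by omega
    exact absurd this hab
  · have hdN : d ∣ N := Nat.gcd_dvd_right m N
    have hdm : d ∣ m := Nat.gcd_dvd_left m N
    have hd0 : 0 < d := Nat.gcd_pos_of_pos_left _ hm
    have h2d : (2:ℕ)^m % 2 = 0 := by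
      obtain ⟨c, hc⟩ := dvd_pow_self 2 (show m ≠ 0 by omega)
      omega
    have hNodd : N % 2 = 1 := by omega
    have hd2 : ¬ (2 ∣ d) := by
      intro h2
      obtain ⟨c, hc⟩ := h2.trans hdN
      omega
    have hdodd : d % 2 = 1 := by
      rcases Nat.mod_two_eq_zero_or_one d with h0 | h1
      · exact absurd (Nat.dvd_of_mod_eq_zero h0) hd2
      · exact h1
    have hd3 : 3 ≤ d := by omega
    haveI : NeZero d := ⟨by omega⟩
    have hcop : Nat.Coprime 2 d := (Nat.prime_two.coprime_iff_not_dvd).mpr hd2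
    set u : (ZMod d)ˣ := ZMod.unitOfCoprime 2 hcop with hu
    have hucoe : (u : ZMod d) = 2 := by
      rw [hu]
      have := ZMod.coe_unitOfCoprime 2 hcop
      simpa using this
    have hcast : ∀ n : ℕ, d ∣ 2^n - 1 ↔ (2 : ZMod d)^n = 1 := by
      intro n
      have h1 : ((2^n - 1 : ℕ) : ZMod d) = (2:ZMod d)^n - 1 := by
        rw [Nat.cast_sub Nat.one_le_two_pow]
        push_cast
        ring
      constructor
      · intro hdvd'
        have h0 : ((2^n - 1 : ℕ) : ZMod d) = 0 := (ZMod.natCast_eq_zero_iff _ _).mpr hdvd'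
        rw [h1] at h0
        exact sub_eq_zero.mp h0
      · intro hpow
        apply (ZMod.natCast_eq_zero_iff _ _).mp
        rw [h1, hpow, sub_self]
    have hum : u ^ m = 1 := by
      have h2 : (2:ZMod d)^m = 1 := (hcast m).mp (by rw [← hN] at *; exact hdN)
      apply Units.ext
      rw [Units.val_pow_eq_pow_val, hucoe, h2, Units.val_one]
    set e := orderOf u with he
    have hedvd : e ∣ m := orderOf_dvd_of_pow_eq_one hum
    have hepos : 0 < e := orderOf_pos u
    have hde : d ∣ 2^e - 1 := by
      apply (hcast e).mpr
      have h2 : ((u^e : (ZMod d)ˣ) : ZMod d) = 1 := by rw [he, pow_orderOf_eq_one]; rfl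
      rw [Units.val_pow_eq_pow_val, hucoe] at h2
      exact h2
    have heltd : e < d := by
      have h1 : e ∣ Fintype.card (ZMod d)ˣ := orderOf_dvd_card
      have h2 : Fintype.card (ZMod d)ˣ = Nat.totient d := ZMod.card_units_eq_totient d
      have h5 : 0 < Fintype.card (ZMod d)ˣ := Fintype.card_pos
      have h6 := Nat.le_of_dvd h5 h1
      have h3 : Nat.totient d < d := Nat.totient_lt d (by omega)
      omega
    have hdlem : d ≤ m := Nat.le_of_dvd hm hdm
    have hemle : e ≤ m := Nat.le_of_dvd hm hedvd
    obtain ⟨r, hm_er⟩ := hedvd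
    have hr0 : r ≠ 0 := by intro h0; rw [h0, Nat.mul_zero] at hm_er; omega
    have hr1' : r ≠ 1 := by intro h1'; rw [h1', Nat.mul_one] at hm_er; omega
    have hr2' : r ≠ 2 := by
      intro h2'
      rw [h2'] at hm_er
      have hd2e : d ∣ e * 2 := by rw [← hm_er]; exact hdm
      have hde' : d ∣ e := Nat.Coprime.dvd_of_dvd_mul_right (Nat.Coprime.symm hcop) hd2e
      have := Nat.le_of_dvd (by omega) hde'
      omega
    have hrge : 3 ≤ r := by clear hbform hdvd; omega
    set S := ∑ t ∈ Finset.range r, 2^(e*t) with hS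
    have hgeo : (2^e - 1) * S = 2^m - 1 := by
      have hZ : ((2:ℤ)^e - 1) * (∑ t ∈ Finset.range r, ((2:ℤ)^e)^t) = (2:ℤ)^m - 1 := by
        rw [mul_comm, geom_sum_mul, ← pow_mul, ← hm_er]
      have hcastS : ((S:ℕ):ℤ) = ∑ t ∈ Finset.range r, ((2:ℤ)^e)^t := by
        rw [hS]
        push_cast
        exact Finset.sum_congr rfl (fun t _ => by rw [pow_mul])
      have hfin : (((2^e - 1) * S : ℕ) : ℤ) = ((2^m - 1 : ℕ) : ℤ) := by
        rw [Nat.cast_mul, Nat.cast_sub Nat.one_le_two_pow, Nat.cast_sub Nat.one_le_two_pow,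
          hcastS]
        push_cast
        rw [← hZ]
      exact_mod_cast hfin
    have hSpos : 0 < S := by
      rcases Nat.eq_zero_or_pos S with h0 | hpos
      · rw [h0, Nat.mul_zero] at hgeo; omega
      · exact hpos
    obtain ⟨c₀, hc₀⟩ := hde
    have hNd : N / d = c₀ * S := by
      have h1 : N = d * (c₀ * S) := by rw [hN, ← hgeo, hc₀]; ring
      rw [h1, Nat.mul_div_cancel_left _ (by omega : 0 < d)]
    have hSdvd : (S:ℤ) ∣ (a:ℤ) - b := by
      refine dvd_trans ?_ hdvd
      rw [hNd]
      push_cast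
      exact dvd_mul_left _ _
    have haf : (∃ i', i' < m ∧ a = 2^i') ∨ ∃ i' j', j' < i' ∧ i' < m ∧ a = 2^i' + 2^j' := by
      right
      exact ⟨i, j, hji, hilt, haij⟩
    have hbf : (∃ i', i' < m ∧ b = 2^i') ∨ ∃ i' j', j' < i' ∧ i' < m ∧ b = 2^i' + 2^j' := by
      rcases hbform with ⟨s, hbs⟩ | ⟨s, t, hts, hbst⟩
      · exact Or.inl ⟨s, hblt s (by rw [hbs]), hbs⟩
      · exact Or.inr ⟨s, t, hts, hblt s (by rw [hbst]; exact Nat.le_add_right _ _), hbst⟩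
    rcases Nat.lt_trichotomy a b with hlt | heqq | hgt
    · exact main_branch hm2 hepos hemle hm_er hrge hN hgeo ha1 hbN hlt
        ((dvd_sub_comm).mp hSdvd) hbf haf
    · exact absurd heqq hab
    · exact main_branch hm2 hepos hemle hm_er hrge hN hgeo hb1 haN hgt hSdvd haf hbf
end

section
/- Let m be a positive integer and let a, b ∈ {1,…,2^m−1} satisfy: a ≠ b; a has exactly two nonzero binary digits; b has at most two nonzero binary digits; and (2^m−1)/gcd(m, 2^m−1) divides the integer a − b. Then β(|a − b|) ≤ 3, where β(k) denotes the number of maximal blocks of consecutive 1's in the binary representation of k. -/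
/-!
The block count satisfies `oneBlocks n = oneBlocks (n / 2) + [n odd and n / 2 even]`, and from
this recursion, adding or subtracting a single power of two changes the number of blocks by at
most one. If `x` has at most two binary digits and `2 ^ k ≤ x`, then `x - 2 ^ k` is a run
`2 ^ q - 2 ^ p` plus a single power of two, so it has at most two blocks; subtracting the second
power of two of `y` costs at most one more. Hence `x - y` has at most three blocks.
-/

/-- `oneBlocks k` is the number of maximal blocks of consecutive 1's in the binary
representation of `k`: equivalently, the number of positions `i` where the `i`-th binary
digit of `k` is 1 and the `(i+1)`-th binary digit is 0. -/
noncomputable def oneBlocks (k : ℕ) : ℕ :=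
  {i : ℕ | k.testBit i = true ∧ k.testBit (i + 1) = false}.ncard

theorem oneBlocks_eq_count {n N : ℕ} (h : n ≤ N) :
    oneBlocks n = Nat.count (fun i => n.testBit i = true ∧ n.testBit (i + 1) = false) N := by
  rw [Nat.count_eq_card_filter_range, oneBlocks, ← Set.ncard_coe_finset]
  congr
  ext i
  simp only [Finset.filter_val, Finset.range_val, Multiset.mem_filter, Multiset.mem_range,
    iff_and_self, and_imp]
  exact fun hi _ => (Nat.lt_two_pow_self).trans_le ((Nat.ge_two_pow_of_testBit hi).trans h)

theorem oneBlocks_zero : oneBlocks 0 = 0 := by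
  simp [oneBlocks_eq_count le_rfl]

theorem oneBlocks_eq_div_two_add (n : ℕ) :
    oneBlocks n = oneBlocks (n / 2) + if n % 2 = 1 ∧ n / 2 % 2 = 0 then 1 else 0 := by
  rw [oneBlocks_eq_count n.le_succ, Nat.count_succ', oneBlocks_eq_count (Nat.div_le_self n 2)]
  simp [← Nat.testBit_div_two, Nat.testBit_zero]

theorem oneBlocks_two_mul (n : ℕ) : oneBlocks (2 * n) = oneBlocks n := by
  rw [oneBlocks_eq_div_two_add]
  simp

theorem oneBlocks_two_mul_add_one (n : ℕ) :
    oneBlocks (2 * n + 1) = oneBlocks n + if n % 2 = 0 then 1 else 0 := by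
  rw [oneBlocks_eq_div_two_add]
  simp [Nat.mul_add_div]

theorem oneBlocks_two_pow_mul (p n : ℕ) : oneBlocks (2 ^ p * n) = oneBlocks n := by
  induction p with
  | zero => simp
  | succ p ih => rw [pow_succ', mul_assoc, oneBlocks_two_mul, ih]

theorem oneBlocks_two_pow_sub_one_le (k : ℕ) : oneBlocks (2 ^ k - 1) ≤ 1 := by
  have hsub : {i | (2 ^ k - 1).testBit i = true ∧ (2 ^ k - 1).testBit (i + 1) = false} ⊆
      {k - 1} := by
    intro i
    simp only [Set.mem_ofPred_eq, Nat.testBit_two_pow_sub_one, Set.mem_singleton_iff]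
    grind
  exact (Set.ncard_le_ncard hsub).trans (Set.ncard_singleton _).le

theorem oneBlocks_two_pow_sub_two_pow_le {p q : ℕ} (h : p ≤ q) :
    oneBlocks (2 ^ q - 2 ^ p) ≤ 1 := by
  have : 2 ^ q - 2 ^ p = 2 ^ p * (2 ^ (q - p) - 1) := by
    rw [Nat.mul_sub, mul_one, ← pow_add, Nat.add_sub_cancel' h]
  rw [this, oneBlocks_two_pow_mul]
  exact oneBlocks_two_pow_sub_one_le _

theorem oneBlocks_succ_le_of_odd {n : ℕ} (hn : n % 2 = 1) : oneBlocks (n + 1) ≤ oneBlocks n := by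
  induction n using Nat.strong_induction_on with
  | _ n ih =>
    obtain ⟨m, rfl⟩ : ∃ m, n = 2 * m + 1 := ⟨n / 2, by omega⟩
    rw [show 2 * m + 1 + 1 = 2 * (m + 1) by ring, oneBlocks_two_mul, oneBlocks_two_mul_add_one]
    rcases Nat.mod_two_eq_zero_or_one m with hm | hm
    · obtain ⟨p, rfl⟩ : ∃ p, m = 2 * p := ⟨m / 2, by omega⟩
      rw [oneBlocks_two_mul_add_one, oneBlocks_two_mul, if_pos hm]
      split_ifs <;> omega
    · simpa [hm] using ih m (by omega) hm

theorem oneBlocks_succ_le (n : ℕ) : oneBlocks (n + 1) ≤ oneBlocks n + 1 := by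
  rcases Nat.mod_two_eq_zero_or_one n with hn | hn
  · obtain ⟨m, rfl⟩ : ∃ m, n = 2 * m := ⟨n / 2, by omega⟩
    rw [oneBlocks_two_mul_add_one, oneBlocks_two_mul]
    split_ifs <;> omega
  · exact (oneBlocks_succ_le_of_odd hn).trans (Nat.le_succ _)

theorem oneBlocks_le_succ_of_even {n : ℕ} (hn : n % 2 = 0) : oneBlocks n ≤ oneBlocks (n + 1) := by
  obtain ⟨m, rfl⟩ : ∃ m, n = 2 * m := ⟨n / 2, by omega⟩
  rw [oneBlocks_two_mul_add_one, oneBlocks_two_mul]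
  exact Nat.le_add_right _ _

theorem oneBlocks_le_succ_add_one (n : ℕ) : oneBlocks n ≤ oneBlocks (n + 1) + 1 := by
  induction n using Nat.strong_induction_on with
  | _ n ih =>
    rcases Nat.mod_two_eq_zero_or_one n with hn | hn
    · exact (oneBlocks_le_succ_of_even hn).trans (Nat.le_succ _)
    obtain ⟨m, rfl⟩ : ∃ m, n = 2 * m + 1 := ⟨n / 2, by omega⟩
    rw [show 2 * m + 1 + 1 = 2 * (m + 1) by ring, oneBlocks_two_mul, oneBlocks_two_mul_add_one]
    rcases Nat.mod_two_eq_zero_or_one m with hm | hm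
    · simpa [hm] using oneBlocks_le_succ_of_even hm
    · simpa [hm] using ih m (by omega)

theorem oneBlocks_add_two_pow_le (n t : ℕ) : oneBlocks (n + 2 ^ t) ≤ oneBlocks n + 1 := by
  induction t generalizing n with
  | zero => exact oneBlocks_succ_le n
  | succ t ih =>
    obtain ⟨m, rfl | rfl⟩ := Nat.even_or_odd' n
    · rw [pow_succ', ← mul_add, oneBlocks_two_mul, oneBlocks_two_mul]
      exact ih m
    · rw [show 2 * m + 1 + 2 ^ (t + 1) = 2 * (m + 2 ^ t) + 1 by ring,
        oneBlocks_two_mul_add_one, oneBlocks_two_mul_add_one]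
      -- for `t = 0`, `m` and `m + 2 ^ t` have opposite parities
      rcases t with _ | t
      · rcases Nat.mod_two_eq_zero_or_one m with hm | hm
        · have := oneBlocks_succ_le m
          simp only [pow_zero, hm]
          split_ifs <;> omega
        · have := oneBlocks_succ_le_of_odd hm
          simp only [pow_zero, hm]
          split_ifs <;> omega
      · have hpar : (m + 2 ^ (t + 1)) % 2 = m % 2 := by rw [pow_succ]; omega
        have := ih m
        rw [hpar]
        split_ifs <;> omega

theorem oneBlocks_le_add_two_pow (n t : ℕ) : oneBlocks n ≤ oneBlocks (n + 2 ^ t) + 1 := by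
  induction t generalizing n with
  | zero => exact oneBlocks_le_succ_add_one n
  | succ t ih =>
    obtain ⟨m, rfl | rfl⟩ := Nat.even_or_odd' n
    · rw [pow_succ', ← mul_add, oneBlocks_two_mul, oneBlocks_two_mul]
      exact ih m
    · rw [show 2 * m + 1 + 2 ^ (t + 1) = 2 * (m + 2 ^ t) + 1 by ring,
        oneBlocks_two_mul_add_one, oneBlocks_two_mul_add_one]
      rcases t with _ | t
      · rcases Nat.mod_two_eq_zero_or_one m with hm | hm
        · have := oneBlocks_le_succ_of_even hm
          simp only [pow_zero, hm]
          split_ifs <;> omega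
        · have := oneBlocks_le_succ_add_one m
          simp only [pow_zero, hm]
          split_ifs <;> omega
      · have hpar : (m + 2 ^ (t + 1)) % 2 = m % 2 := by rw [pow_succ]; omega
        have := ih m
        rw [hpar]
        split_ifs <;> omega

theorem oneBlocks_sub_two_pow_le {n t : ℕ} (h : 2 ^ t ≤ n) :
    oneBlocks (n - 2 ^ t) ≤ oneBlocks n + 1 := by
  simpa [Nat.sub_add_cancel h] using oneBlocks_le_add_two_pow (n - 2 ^ t) t

theorem oneBlocks_two_pow_le (t : ℕ) : oneBlocks (2 ^ t) ≤ 1 := by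
  simpa [oneBlocks_zero] using oneBlocks_add_two_pow_le 0 t

theorem digits_two_sum (n : ℕ) : (Nat.digits 2 n).sum = n % 2 + (Nat.digits 2 (n / 2)).sum := by
  rcases Nat.eq_zero_or_pos n with rfl | hn
  · simp
  · rw [Nat.digits_def' one_lt_two hn, List.sum_cons]

theorem eq_zero_of_digits_two_sum_eq_zero {n : ℕ} (h : (Nat.digits 2 n).sum = 0) : n = 0 := by
  induction n using Nat.strong_induction_on with
  | _ n ih =>
    rw [digits_two_sum] at h
    rcases Nat.eq_zero_or_pos n with rfl | hn
    · rfl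
    · have := ih (n / 2) (by omega) (by omega)
      omega

theorem exists_eq_two_pow_of_digits_two_sum_eq_one {n : ℕ} (h : (Nat.digits 2 n).sum = 1) :
    ∃ i, n = 2 ^ i := by
  induction n using Nat.strong_induction_on with
  | _ n ih =>
    rw [digits_two_sum] at h
    rcases Nat.mod_two_eq_zero_or_one n with hn | hn
    · have hpos : 0 < n := Nat.pos_of_ne_zero (by rintro rfl; simp at h)
      obtain ⟨i, hi⟩ := ih (n / 2) (by omega) (by omega)
      exact ⟨i + 1, by rw [pow_succ]; omega⟩
    · have := eq_zero_of_digits_two_sum_eq_zero (n := n / 2) (by omega)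
      exact ⟨0, by omega⟩

theorem exists_eq_two_pow_add_two_pow_of_digits_two_sum_eq_two {n : ℕ}
    (h : (Nat.digits 2 n).sum = 2) : ∃ i j, j < i ∧ n = 2 ^ i + 2 ^ j := by
  induction n using Nat.strong_induction_on with
  | _ n ih =>
    rw [digits_two_sum] at h
    rcases Nat.mod_two_eq_zero_or_one n with hn | hn
    · have hpos : 0 < n := Nat.pos_of_ne_zero (by rintro rfl; simp at h)
      obtain ⟨i, j, hji, hij⟩ := ih (n / 2) (by omega) (by omega)
      exact ⟨i + 1, j + 1, by omega, by rw [pow_succ, pow_succ]; omega⟩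
    · obtain ⟨i, hi⟩ := exists_eq_two_pow_of_digits_two_sum_eq_one (n := n / 2) (by omega)
      exact ⟨i + 1, 0, by omega, by rw [pow_succ]; omega⟩

theorem oneBlocks_two_pow_add_two_pow_sub_two_pow_le {i j k : ℕ} (hji : j < i)
    (hk : 2 ^ k ≤ 2 ^ i + 2 ^ j) : oneBlocks (2 ^ i + 2 ^ j - 2 ^ k) ≤ 2 := by
  have hij : 2 ^ j < 2 ^ i := Nat.pow_lt_pow_right one_lt_two hji
  rcases le_or_gt k j with hkj | hjk
  · have hkj' : 2 ^ k ≤ 2 ^ j := Nat.pow_le_pow_right two_pos hkj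
    rw [show 2 ^ i + 2 ^ j - 2 ^ k = 2 ^ j - 2 ^ k + 2 ^ i by omega]
    exact (oneBlocks_add_two_pow_le _ i).trans (by simpa using oneBlocks_two_pow_sub_two_pow_le hkj)
  · have hki : k ≤ i := by
      by_contra! hik
      have : 2 ^ (i + 1) ≤ 2 ^ k := Nat.pow_le_pow_right two_pos hik
      rw [pow_succ] at this
      omega
    have hki' : 2 ^ k ≤ 2 ^ i := Nat.pow_le_pow_right two_pos hki
    rw [show 2 ^ i + 2 ^ j - 2 ^ k = 2 ^ i - 2 ^ k + 2 ^ j by omega]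
    exact (oneBlocks_add_two_pow_le _ j).trans (by simpa using oneBlocks_two_pow_sub_two_pow_le hki)

theorem eq_zero_or_eq_two_pow_or_eq_two_pow_add_two_pow {n : ℕ} (h : (Nat.digits 2 n).sum ≤ 2) :
    n = 0 ∨ (∃ i, n = 2 ^ i) ∨ ∃ i j, j < i ∧ n = 2 ^ i + 2 ^ j := by
  rcases (by omega : (Nat.digits 2 n).sum = 0 ∨ (Nat.digits 2 n).sum = 1 ∨
      (Nat.digits 2 n).sum = 2) with h0 | h1 | h2
  · exact .inl (eq_zero_of_digits_two_sum_eq_zero h0)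
  · exact .inr (.inl (exists_eq_two_pow_of_digits_two_sum_eq_one h1))
  · exact .inr (.inr (exists_eq_two_pow_add_two_pow_of_digits_two_sum_eq_two h2))

theorem oneBlocks_le_two_of_digits_two_sum_le_two {n : ℕ} (h : (Nat.digits 2 n).sum ≤ 2) :
    oneBlocks n ≤ 2 := by
  rcases eq_zero_or_eq_two_pow_or_eq_two_pow_add_two_pow h with rfl | ⟨i, rfl⟩ | ⟨i, j, -, rfl⟩
  · simp [oneBlocks_zero]
  · exact (oneBlocks_two_pow_le i).trans one_le_two
  · rw [add_comm]
    exact (oneBlocks_add_two_pow_le _ i).trans (by simpa using oneBlocks_two_pow_le j)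

theorem oneBlocks_sub_two_pow_le_two {n k : ℕ} (h : (Nat.digits 2 n).sum ≤ 2) (hk : 2 ^ k ≤ n) :
    oneBlocks (n - 2 ^ k) ≤ 2 := by
  rcases eq_zero_or_eq_two_pow_or_eq_two_pow_add_two_pow h with rfl | ⟨i, rfl⟩ | ⟨i, j, hji, rfl⟩
  · simp [oneBlocks_zero]
  · exact (oneBlocks_two_pow_sub_two_pow_le ((Nat.pow_le_pow_iff_right one_lt_two).mp hk)).trans
      one_le_two
  · exact oneBlocks_two_pow_add_two_pow_sub_two_pow_le hji hk

theorem oneBlocks_sub_le_three {x y : ℕ} (hx : (Nat.digits 2 x).sum ≤ 2)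
    (hy : (Nat.digits 2 y).sum ≤ 2) : oneBlocks (x - y) ≤ 3 := by
  obtain hxy | hyx := lt_or_ge x y
  · simp [Nat.sub_eq_zero_of_le hxy.le, oneBlocks_zero]
  rcases eq_zero_or_eq_two_pow_or_eq_two_pow_add_two_pow hy with rfl | ⟨k, rfl⟩ | ⟨k, l, -, rfl⟩
  · exact (oneBlocks_le_two_of_digits_two_sum_le_two hx).trans (by norm_num)
  · exact (oneBlocks_sub_two_pow_le_two hx hyx).trans (by norm_num)
  · rw [← Nat.sub_sub]
    exact (oneBlocks_sub_two_pow_le (Nat.le_sub_of_add_le' hyx)).trans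
      (Nat.add_le_add_right (oneBlocks_sub_two_pow_le_two hx (le_of_add_le_left hyx)) 1)

theorem oneBlocks_le_three_of_configuration_general
    (a b : ℕ)
    (hsa : (Nat.digits 2 a).sum = 2) (hsb : (Nat.digits 2 b).sum ≤ 2) :
    oneBlocks ((a : ℤ) - (b : ℤ)).natAbs ≤ 3 := by
  rcases (by omega : ((a : ℤ) - b).natAbs = a - b ∨ ((a : ℤ) - b).natAbs = b - a) with h | h <;>
    rw [h]
  · exact oneBlocks_sub_le_three hsa.le hsb
  · exact oneBlocks_sub_le_three hsb hsa.le

/-- If `a, b ∈ {1, …, 2^m - 1}` are distinct, `a` has exactly two nonzero binary digits,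
`b` has at most two nonzero binary digits, and `(2^m - 1)/gcd(m, 2^m - 1)` divides the
integer `a - b`, then `|a - b|` has at most three maximal blocks of consecutive 1's in its
binary representation. -/
theorem oneBlocks_le_three_of_configuration
    (m : ℕ) (hm : 0 < m) (a b : ℕ)
    (ha1 : 1 ≤ a) (ha2 : a ≤ 2 ^ m - 1) (hb1 : 1 ≤ b) (hb2 : b ≤ 2 ^ m - 1)
    (hab : a ≠ b)
    (hsa : (Nat.digits 2 a).sum = 2) (hsb : (Nat.digits 2 b).sum ≤ 2)
    (hdvd : (((2 ^ m - 1) / Nat.gcd m (2 ^ m - 1) : ℕ) : ℤ) ∣ (a : ℤ) - (b : ℤ)) :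
    oneBlocks ((a : ℤ) - (b : ℤ)).natAbs ≤ 3 :=
  oneBlocks_le_three_of_configuration_general a b hsa hsb
end

section
/- Let k and t be natural numbers with β(k) ≥ 1, where β(k) denotes the number of maximal blocks of consecutive 1's in the binary representation of k. Then s(k + 2^t) ≥ β(k), where s(k) denotes the total number of 1's in the binary representation of k. -/
/-- `onesCount k` is the total number of 1's in the binary representation of `k`. -/
noncomputable def onesCount (k : ℕ) : ℕ :=
  {i : ℕ | k.testBit i = true}.ncard

/-!
Both counts satisfy a recursion under halving: `s(k) = s(⌊k/2⌋) + k mod 2` and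
`β(k) = β(⌊k/2⌋) + [k ≡ 1 mod 4]`. For `t > 0`, adding `2^t` commutes with halving and keeps the
last bit, so induction on `t` reduces the claim to `β(k) ≤ s(k + 1)`. That case follows by strong
induction on `k` from `β ≤ s`, splitting on `k mod 4`: when `k ≡ 3 mod 4`, the carry of `k + 1`
passes through the last block, `k + 1 = 2(⌊k/2⌋ + 1)`, and `β(k) = β(⌊k/2⌋)`.
-/

theorem Set.ncard_setOf_nat_eq_ncard_setOf_succ_add (p : ℕ → Prop) [Decidable (p 0)]
    (hp : {i | p i}.Finite) :
    {i | p i}.ncard = {i | p (i + 1)}.ncard + if p 0 then 1 else 0 := by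
  have hshift : {i | p (i + 1)}.ncard = ((· + 1) '' {i | p (i + 1)}).ncard :=
    (Set.ncard_image_of_injective _ (add_left_injective 1)).symm
  have hzero : 0 ∉ (· + 1) '' {i | p (i + 1)} := by simp
  split_ifs with h0
  · have : {i | p i} = insert 0 ((· + 1) '' {i | p (i + 1)}) := by
      ext (_ | i) <;> simp [h0]
    rw [this, Set.ncard_insert_of_notMem hzero
      ((hp.preimage (add_left_injective 1).injOn).image _), hshift]
  · have : {i | p i} = (· + 1) '' {i | p (i + 1)} := by
      ext (_ | i) <;> simp [h0]
    rw [this, hshift, add_zero]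

theorem Nat.finite_setOf_testBit (k : ℕ) : {i | k.testBit i = true}.Finite :=
  (Set.finite_Iio k).subset fun _ hi =>
    Nat.lt_two_pow_self.trans_le (Nat.ge_two_pow_of_testBit hi)

theorem oneBlocks_le_onesCount (k : ℕ) : oneBlocks k ≤ onesCount k :=
  Set.ncard_le_ncard (fun _ hi => hi.1) (Nat.finite_setOf_testBit k)

theorem onesCount_eq_onesCount_div_two_add (k : ℕ) :
    onesCount k = onesCount (k / 2) + k % 2 := by
  unfold onesCount
  rw [Set.ncard_setOf_nat_eq_ncard_setOf_succ_add _ (Nat.finite_setOf_testBit k)]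
  simp only [Nat.testBit_div_two, Nat.testBit_zero, decide_eq_true_eq]
  split_ifs <;> omega

theorem oneBlocks_eq_oneBlocks_div_two_add (k : ℕ) :
    oneBlocks k = oneBlocks (k / 2) + if k % 4 = 1 then 1 else 0 := by
  unfold oneBlocks
  rw [Set.ncard_setOf_nat_eq_ncard_setOf_succ_add _
    ((Nat.finite_setOf_testBit k).subset fun _ hi => hi.1)]
  simp only [← Nat.testBit_div_two, Nat.testBit_zero, decide_eq_true_eq,
    decide_eq_false_iff_not]
  split_ifs <;> omega

theorem oneBlocks_le_oneBlocks_div_two_add (k : ℕ) :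
    oneBlocks k ≤ oneBlocks (k / 2) + k % 2 := by
  rw [oneBlocks_eq_oneBlocks_div_two_add k]
  split_ifs <;> omega

theorem oneBlocks_le_onesCount_succ (k : ℕ) : oneBlocks k ≤ onesCount (k + 1) := by
  induction k using Nat.strong_induction_on with
  | _ k ih =>
  have hk := oneBlocks_eq_oneBlocks_div_two_add k
  rw [onesCount_eq_onesCount_div_two_add (k + 1)]
  rcases (by omega : k % 2 = 0 ∨ k % 4 = 1 ∨ k % 4 = 3) with h_even | h_one | h_three
  · rw [if_neg (by omega)] at hk
    rw [show (k + 1) / 2 = k / 2 by omega]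
    have := oneBlocks_le_onesCount (k / 2)
    omega
  · rw [if_pos h_one, oneBlocks_eq_oneBlocks_div_two_add (k / 2), if_neg (by omega)] at hk
    rw [onesCount_eq_onesCount_div_two_add ((k + 1) / 2),
      show (k + 1) / 2 / 2 = k / 2 / 2 by omega]
    have := oneBlocks_le_onesCount (k / 2 / 2)
    omega
  · rw [if_neg (by omega)] at hk
    rw [show (k + 1) / 2 = k / 2 + 1 by omega]
    have := ih (k / 2) (by omega)
    omega

theorem onesCount_add_two_pow_ge_oneBlocks_general
    (k t : ℕ) :
    oneBlocks k ≤ onesCount (k + 2 ^ t) := by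
  induction t generalizing k with
  | zero => simpa using oneBlocks_le_onesCount_succ k
  | succ u ih =>
    calc oneBlocks k ≤ oneBlocks (k / 2) + k % 2 := oneBlocks_le_oneBlocks_div_two_add k
      _ ≤ onesCount (k / 2 + 2 ^ u) + k % 2 := by gcongr; exact ih _
      _ = onesCount (k + 2 ^ (u + 1)) := by
        rw [onesCount_eq_onesCount_div_two_add (k + 2 ^ (u + 1)), pow_succ,
          show (k + 2 ^ u * 2) / 2 = k / 2 + 2 ^ u by omega, Nat.add_mul_mod_self_right]

/-- If `k` has at least one 1-block, then the number of 1's in the binary representation of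
`k + 2^t` is at least the number of maximal 1-blocks of `k`: `s(k + 2^t) ≥ β(k)`. -/
theorem onesCount_add_two_pow_ge_oneBlocks
    (k t : ℕ) (hk : 1 ≤ oneBlocks k) :
    oneBlocks k ≤ onesCount (k + 2 ^ t) :=
  onesCount_add_two_pow_ge_oneBlocks_general k t
end
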